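/- arXiv:1904.09528 — 5 statements merged into one kernel-verified Lean document; each statement's English description precedes it below -/
import Mathlib

section
/- There is a universal constant C > 0 such that for every Y as in the context, every s ∈ ℝ and every τ ∈ [−π,π]: |Y(s+τ) − Y(s) − τ Y'(s)| ≤ C τ² R, |Y(s+τ) − Y(s) − τ Y'(s+τ)| ≤ C τ² R, | |Y(s+τ) − Y(s)| − |τ| |Y'(s)| | ≤ C τ² R, and | |Y(s+τ) − Y(s)| − |τ| |Y'(s+τ)| | ≤ C τ² R, where R = R(s,τ) = ℳY''(s+τ) + |Y''(s+τ)|. -/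
open MeasureTheory Real Filter Topology
open scoped RealInnerProductSpace ENNReal

noncomputable section

abbrev E2 : Type := EuclideanSpace ℝ (Fin 2)

/-- The centered Hardy–Littlewood maximal function
`ℳg(x) = sup_{r>0} (2r)⁻¹ ∫_{x−r}^{x+r} |g(y)| dy`, valued in `ℝ≥0∞`. -/
def maxFn (g : ℝ → E2) (x : ℝ) : ℝ≥0∞ :=
  ⨆ (r : ℝ) (_ : 0 < r),
    (ENNReal.ofReal (2 * r))⁻¹ * ∫⁻ y in Set.Ioc (x - r) (x + r), (‖g y‖₊ : ℝ≥0∞)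

/-- `R(s,τ) = ℳY''(s+τ) + |Y''(s+τ)|`, here as a function of the point `x = s+τ`. -/
def Rfn (g : ℝ → E2) (x : ℝ) : ℝ≥0∞ := maxFn g x + (‖g x‖₊ : ℝ≥0∞)

/-!
Put `x = s + τ`. The window `[x - |τ|, x + |τ|]` contains both `s` and `x`, so on `[s, x]` the
oscillation of `Y'` is at most `∫ ‖Y''‖` over the window, which is at most `2|τ| ℳY''(x)`. The mean
value theorem for `u ↦ Y u - u • c`, with `c = Y' s` or `c = Y' x`, bounds the Taylor remainder
by `|τ|` times this oscillation, and the reverse triangle inequality gives the estimates on the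
norms. Hence `C = 2`.
-/

open Set

section Taylor

variable {E : Type*} [NormedAddCommGroup E] [NormedSpace ℝ E]

theorem norm_sub_le_integral_norm_of_mem_Icc {g g'' : ℝ → E} {lo hi u v : ℝ}
    (hg : ∀ a b : ℝ, a ≤ b → g b - g a = ∫ w in a..b, g'' w)
    (hint : IntegrableOn g'' (Ioc lo hi)) (hu : u ∈ Icc lo hi) (hv : v ∈ Icc lo hi) :
    ‖g v - g u‖ ≤ ∫ y in Ioc lo hi, ‖g'' y‖ := by
  wlog huv : u ≤ v generalizing u v
  · rw [norm_sub_rev]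
    exact this hv hu (le_of_not_ge huv)
  calc ‖g v - g u‖ = ‖∫ w in u..v, g'' w‖ := by rw [hg u v huv]
    _ ≤ ∫ w in Ioc u v, ‖g'' w‖ := by
      rw [← intervalIntegral.integral_of_le huv]
      exact intervalIntegral.norm_integral_le_integral_norm huv
    _ ≤ ∫ y in Ioc lo hi, ‖g'' y‖ :=
      setIntegral_mono_set hint.norm (.of_forall fun _ => norm_nonneg _)
        (.of_forall <| Ioc_subset_Ioc hu.1 hv.2)

theorem norm_sub_sub_smul_le_of_forall_norm_deriv_sub_le {f f' : ℝ → E} {c : E} {a t M : ℝ}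
    (hf : ∀ u, HasDerivAt f (f' u) u) (hM : ∀ u ∈ uIcc a (a + t), ‖f' u - c‖ ≤ M) :
    ‖f (a + t) - f a - t • c‖ ≤ M * |t| := by
  have hderiv : ∀ u ∈ uIcc a (a + t),
      HasDerivWithinAt (fun u => f u - u • c) (f' u - c) (uIcc a (a + t)) u := fun u _ =>
    ((hf u).sub (by simpa using (hasDerivAt_id u).smul_const c)).hasDerivWithinAt
  have h := (convex_uIcc a (a + t)).norm_image_sub_le_of_norm_hasDerivWithin_le hderiv hM
    left_mem_uIcc right_mem_uIcc
  rwa [add_sub_cancel_left, Real.norm_eq_abs, add_smul, ← sub_sub, sub_right_comm (f (a + t)),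
    sub_sub_sub_cancel_right, sub_right_comm] at h

theorem abs_norm_sub_abs_mul_norm_le (v c : E) (t : ℝ) : |‖v‖ - |t| * ‖c‖| ≤ ‖v - t • c‖ := by
  simpa only [norm_smul, Real.norm_eq_abs] using abs_norm_sub_norm_le v (t • c)

end Taylor

theorem uIcc_self_add_subset_Icc (s τ : ℝ) :
    uIcc s (s + τ) ⊆ Icc (s + τ - |τ|) (s + τ + |τ|) := by
  intro u hu
  rw [mem_uIcc] at hu
  constructor <;> cases abs_cases τ <;> cases hu <;> linarith

theorem lintegral_Ioc_le_mul_maxFn (g : ℝ → E2) {x r : ℝ} (hr : 0 < r) :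
    ∫⁻ y in Ioc (x - r) (x + r), (‖g y‖₊ : ℝ≥0∞) ≤ ENNReal.ofReal (2 * r) * maxFn g x := by
  have h2r : ENNReal.ofReal (2 * r) ≠ 0 := (ENNReal.ofReal_pos.mpr (by positivity)).ne'
  rw [← ENNReal.inv_mul_le_iff h2r ENNReal.ofReal_ne_top]
  exact le_iSup₂ (f := fun (ρ : ℝ) (_ : 0 < ρ) =>
    (ENNReal.ofReal (2 * ρ))⁻¹ * ∫⁻ y in Ioc (x - ρ) (x + ρ), (‖g y‖₊ : ℝ≥0∞)) r hr

theorem ofReal_le_two_mul_sq_mul_Rfn {g : ℝ → E2} {x τ v : ℝ}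
    (hint : IntegrableOn g (Ioc (x - |τ|) (x + |τ|)))
    (hv : v ≤ (∫ y in Ioc (x - |τ|) (x + |τ|), ‖g y‖) * |τ|) :
    ENNReal.ofReal v ≤ ENNReal.ofReal (2 * τ ^ 2) * Rfn g x := by
  rcases eq_or_ne τ 0 with rfl | hτ
  · simp [ENNReal.ofReal_eq_zero.mpr (by simpa using hv)]
  have hr : 0 < |τ| := abs_pos.mpr hτ
  calc ENNReal.ofReal v
      ≤ ENNReal.ofReal |τ| * ENNReal.ofReal (∫ y in Ioc (x - |τ|) (x + |τ|), ‖g y‖) := by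
        rw [← ENNReal.ofReal_mul hr.le, mul_comm]
        exact ENNReal.ofReal_le_ofReal hv
    _ ≤ ENNReal.ofReal |τ| * (ENNReal.ofReal (2 * |τ|) * maxFn g x) := by
        rw [ofReal_integral_norm_eq_lintegral_enorm hint]
        gcongr
        exact lintegral_Ioc_le_mul_maxFn g hr
    _ = ENNReal.ofReal (2 * τ ^ 2) * maxFn g x := by
        rw [← mul_assoc, ← ENNReal.ofReal_mul hr.le, ← sq_abs τ]
        ring_nf
    _ ≤ ENNReal.ofReal (2 * τ ^ 2) * Rfn g x := by
        gcongr
        exact le_self_add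

/-- Basic Taylor-type estimates in terms of the maximal function of `Y''`. -/
theorem statement2 :
    ∃ C : ℝ, 0 < C ∧
      ∀ (Y Y' Y'' : ℝ → E2),
        Function.Periodic Y (2 * π) →
        (∀ s, HasDerivAt Y (Y' s) s) →
        Continuous Y' →
        LocallyIntegrable Y'' volume →
        (∀ a b : ℝ, a ≤ b → Y' b - Y' a = ∫ u in a..b, Y'' u) →
        ∀ (s τ : ℝ), |τ| ≤ π →
          ENNReal.ofReal ‖Y (s + τ) - Y s - τ • Y' s‖
              ≤ ENNReal.ofReal (C * τ ^ 2) * Rfn Y'' (s + τ) ∧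
          ENNReal.ofReal ‖Y (s + τ) - Y s - τ • Y' (s + τ)‖
              ≤ ENNReal.ofReal (C * τ ^ 2) * Rfn Y'' (s + τ) ∧
          ENNReal.ofReal |‖Y (s + τ) - Y s‖ - |τ| * ‖Y' s‖|
              ≤ ENNReal.ofReal (C * τ ^ 2) * Rfn Y'' (s + τ) ∧
          ENNReal.ofReal |‖Y (s + τ) - Y s‖ - |τ| * ‖Y' (s + τ)‖|
              ≤ ENNReal.ofReal (C * τ ^ 2) * Rfn Y'' (s + τ) := by
  refine ⟨2, two_pos, fun Y Y' Y'' _ hY _ hY''loc hY' s τ _ => ?_⟩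
  have hint : IntegrableOn Y'' (Ioc (s + τ - |τ|) (s + τ + |τ|)) :=
    (hY''loc.integrableOn_isCompact isCompact_Icc).mono_set Ioc_subset_Icc_self
  have hosc : ∀ u ∈ uIcc s (s + τ), ∀ v ∈ uIcc s (s + τ),
      ‖Y' v - Y' u‖ ≤ ∫ y in Ioc (s + τ - |τ|) (s + τ + |τ|), ‖Y'' y‖ := fun u hu v hv =>
    norm_sub_le_integral_norm_of_mem_Icc hY' hint (uIcc_self_add_subset_Icc s τ hu)
      (uIcc_self_add_subset_Icc s τ hv)
  have h₁ := norm_sub_sub_smul_le_of_forall_norm_deriv_sub_le hY (hosc s left_mem_uIcc)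
  have h₂ := norm_sub_sub_smul_le_of_forall_norm_deriv_sub_le hY (hosc (s + τ) right_mem_uIcc)
  exact ⟨ofReal_le_two_mul_sq_mul_Rfn hint h₁, ofReal_le_two_mul_sq_mul_Rfn hint h₂,
    ofReal_le_two_mul_sq_mul_Rfn hint ((abs_norm_sub_abs_mul_norm_le _ _ _).trans h₁),
    ofReal_le_two_mul_sq_mul_Rfn hint ((abs_norm_sub_abs_mul_norm_le _ _ _).trans h₂)⟩
end
end

section
/- There is a universal constant C > 0 with the following property. Let Y, λ, S, μ, M₀ be as in the context, with Y satisfying the well-stretched condition with constant λ > 0. Then for every s ∈ ℝ and every τ ∈ [−π,π]: |S(|Y'(s+τ)|, s+τ) Y'(s+τ) − S(|Y'(s)|, s) Y'(s)| ≤ C μ |τ| (Q + R), where Q = ‖Y'‖_{L^∞(𝕋)} and R = R(s,τ) = ℳY''(s+τ) + |Y''(s+τ)|. -/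
open MeasureTheory Real Filter Topology
open scoped RealInnerProductSpace ENNReal

noncomputable section

/-- The `L^∞(𝕋)` norm. -/
def normLinf (g : ℝ → E2) : ℝ := ⨆ s : ℝ, ‖g s‖

/-- The estimate `|SY'(s+τ) − SY'(s)| ≤ C μ |τ| (Q + R)`. -/
theorem statement4 :
    ∃ C : ℝ, 0 < C ∧
      ∀ (Y Y' Y'' : ℝ → E2) (S Sp Ss : ℝ → ℝ → ℝ) (lam μ : ℝ),
        0 < lam → 0 < μ →
        Function.Periodic Y (2 * π) →
        (∀ s, HasDerivAt Y (Y' s) s) →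
        Continuous Y' →
        LocallyIntegrable Y'' volume →
        (∀ a b : ℝ, a ≤ b → Y' b - Y' a = ∫ u in a..b, Y'' u) →
        -- well-stretched condition with constant `lam`
        (∀ s₁ s₂ : ℝ, |s₁ - s₂| ≤ π → lam * |s₁ - s₂| ≤ ‖Y s₁ - Y s₂‖) →
        -- `S` is `2π`-periodic in its second argument
        (∀ p s, S p (s + 2 * π) = S p s) →
        -- `S` is continuously differentiable on `(0,∞) × ℝ`, with partial
        -- derivatives `Sp` and `Ss`
        (∀ p s, 0 < p → HasDerivAt (fun q => S q s) (Sp p s) p) →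
        (∀ p s, 0 < p → HasDerivAt (fun t => S p t) (Ss p s) s) →
        ContinuousOn (fun q : ℝ × ℝ => S q.1 q.2) (Set.Ioi 0 ×ˢ Set.univ) →
        ContinuousOn (fun q : ℝ × ℝ => Sp q.1 q.2) (Set.Ioi 0 ×ˢ Set.univ) →
        ContinuousOn (fun q : ℝ × ℝ => Ss q.1 q.2) (Set.Ioi 0 ×ˢ Set.univ) →
        -- the `C⁰` and `C¹` bound for `S` with constant `μ`
        (∀ p s, lam ≤ p → p ≤ normLinf Y' →
          |S p s| + |Ss p s| + normLinf Y' * |Sp p s| ≤ μ) →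
        ∀ (s τ : ℝ), |τ| ≤ π →
          ENNReal.ofReal ‖S ‖Y' (s + τ)‖ (s + τ) • Y' (s + τ) - S ‖Y' s‖ s • Y' s‖
            ≤ ENNReal.ofReal (C * μ * |τ|) *
                (ENNReal.ofReal (normLinf Y') + Rfn Y'' (s + τ)) := by
  refine ⟨4, by norm_num, ?_⟩
  intro Y Y' Y'' S Sp Ss lam μ hlam hμ0 hper hY' hY'cont hY''loc hFTC hws _hSper hSp hSs _hScont
    _hSpcont _hSscont hμ s τ hτπ
  -- `Y'` is periodic
  have Y'per : Function.Periodic Y' (2 * π) := by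
    intro t
    have h2 : HasDerivAt (fun u => Y (u + 2 * π)) (Y' (t + 2 * π)) t :=
      HasDerivAt.comp_add_const t (2 * π) (hY' _)
    have h3 : HasDerivAt Y (Y' (t + 2 * π)) t := by
      have he : (fun u => Y (u + 2 * π)) = Y := funext fun u => hper u
      rwa [he] at h2
    exact h3.unique (hY' t)
  -- `‖Y' ·‖` is bounded above
  have hbdd : BddAbove (Set.range fun t => ‖Y' t‖) := by
    have hc : IsCompact (Set.range Y') :=
      Y'per.compact_of_continuous (by positivity) hY'cont
    have : Set.range (fun t => ‖Y' t‖) = norm '' Set.range Y' := by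
      rw [← Set.range_comp]; rfl
    rw [this]
    exact (hc.image continuous_norm).bddAbove
  set M : ℝ := normLinf Y' with hM
  have hub : ∀ t, ‖Y' t‖ ≤ M := fun t => le_ciSup hbdd t
  -- lower bound `lam ≤ ‖Y' t‖` from the well-stretched condition
  have hlow : ∀ t, lam ≤ ‖Y' t‖ := by
    intro t
    have hslope := hasDerivAt_iff_tendsto_slope.1 (hY' t)
    have htend : Tendsto (fun u => ‖slope Y t u‖) (𝓝[≠] t) (𝓝 ‖Y' t‖) :=
      (continuous_norm.tendsto _).comp hslope
    refine ge_of_tendsto htend ?_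
    have hball : Metric.ball t π ∈ 𝓝[≠] t :=
      nhdsWithin_le_nhds (Metric.ball_mem_nhds t Real.pi_pos)
    filter_upwards [hball, self_mem_nhdsWithin] with u hu hne
    have hne' : u ≠ t := hne
    have hpos : 0 < |u - t| := abs_pos.2 (sub_ne_zero.2 hne')
    have hle : |u - t| ≤ π := le_of_lt (by simpa [Real.dist_eq] using hu)
    have h2 := hws u t hle
    rw [slope_def_module, norm_smul, norm_inv, Real.norm_eq_abs]
    calc lam = |u - t|⁻¹ * (lam * |u - t|) := by field_simp
      _ ≤ |u - t|⁻¹ * ‖Y u - Y t‖ :=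
        mul_le_mul_of_nonneg_left h2 (inv_nonneg.2 hpos.le)
  have hMpos : 0 < M := lt_of_lt_of_le hlam (le_trans (hlow 0) (hub 0))
  set x : ℝ := s + τ with hx
  set p₁ : ℝ := ‖Y' s‖ with hp₁
  set p₂ : ℝ := ‖Y' x‖ with hp₂
  have hp₁l : lam ≤ p₁ := hlow s
  have hp₂l : lam ≤ p₂ := hlow x
  have hp₁u : p₁ ≤ M := hub s
  have hp₂u : p₂ ≤ M := hub x
  -- bound on `Sp` on `[lam, M]`
  have hSpbound : ∀ q ∈ Set.Icc lam M, ‖Sp q x‖ ≤ μ / M := by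
    intro q hq
    have h := hμ q x hq.1 hq.2
    rw [Real.norm_eq_abs, le_div_iff₀ hMpos]
    have h1 : 0 ≤ |S q x| := abs_nonneg _
    have h2 : 0 ≤ |Ss q x| := abs_nonneg _
    nlinarith [abs_nonneg (Sp q x)]
  -- MVT in the first variable
  have hmvt1 : |S p₂ x - S p₁ x| ≤ μ / M * |p₂ - p₁| := by
    have := Convex.norm_image_sub_le_of_norm_hasDerivWithin_le
      (f := fun q => S q x) (f' := fun q => Sp q x) (s := Set.Icc lam M)
      (fun q hq => (hSp q x (lt_of_lt_of_le hlam hq.1)).hasDerivWithinAt)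
      hSpbound (convex_Icc _ _) ⟨hp₁l, hp₁u⟩ ⟨hp₂l, hp₂u⟩
    simpa [Real.norm_eq_abs] using this
  -- MVT in the second variable
  have hmvt2 : |S p₁ x - S p₁ s| ≤ μ * |x - s| := by
    have hbound : ∀ t ∈ (Set.univ : Set ℝ), ‖Ss p₁ t‖ ≤ μ := by
      intro t _
      have h := hμ p₁ t hp₁l hp₁u
      rw [Real.norm_eq_abs]
      nlinarith [abs_nonneg (S p₁ t), abs_nonneg (Sp p₁ t), mul_nonneg hMpos.le
        (abs_nonneg (Sp p₁ t))]
    have := Convex.norm_image_sub_le_of_norm_hasDerivWithin_le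
      (f := fun t => S p₁ t) (f' := fun t => Ss p₁ t) (s := Set.univ)
      (fun t _ => (hSs p₁ t (lt_of_lt_of_le hlam hp₁l)).hasDerivWithinAt)
      hbound convex_univ (Set.mem_univ s) (Set.mem_univ x)
    simpa [Real.norm_eq_abs] using this
  have hxs : |x - s| = |τ| := by rw [hx]; ring_nf
  -- the real estimate
  set Δ : ℝ := ‖Y' x - Y' s‖ with hΔdef
  have hreal : ‖S p₂ x • Y' x - S p₁ s • Y' s‖ ≤ 2 * μ * Δ + μ * |τ| * M := by
    have hid : S p₂ x • Y' x - S p₁ s • Y' s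
        = S p₂ x • (Y' x - Y' s) + (S p₂ x - S p₁ s) • Y' s := by
      rw [smul_sub, sub_smul]; abel
    have hS2 : |S p₂ x| ≤ μ := by
      have h := hμ p₂ x hp₂l hp₂u
      nlinarith [abs_nonneg (Ss p₂ x), mul_nonneg hMpos.le (abs_nonneg (Sp p₂ x))]
    have hΔp : |p₂ - p₁| ≤ Δ := abs_norm_sub_norm_le _ _
    have hSdiff : |S p₂ x - S p₁ s| ≤ μ / M * Δ + μ * |τ| := by
      calc |S p₂ x - S p₁ s| ≤ |S p₂ x - S p₁ x| + |S p₁ x - S p₁ s| := by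
            have := abs_sub_le (S p₂ x) (S p₁ x) (S p₁ s); linarith
        _ ≤ μ / M * Δ + μ * |τ| := by
            rw [hxs] at hmvt2
            have h1 : μ / M * |p₂ - p₁| ≤ μ / M * Δ :=
              mul_le_mul_of_nonneg_left hΔp (by positivity)
            linarith
    calc ‖S p₂ x • Y' x - S p₁ s • Y' s‖
        ≤ ‖S p₂ x • (Y' x - Y' s)‖ + ‖(S p₂ x - S p₁ s) • Y' s‖ := by
          rw [hid]; exact norm_add_le _ _
      _ = |S p₂ x| * Δ + |S p₂ x - S p₁ s| * p₁ := by
          rw [norm_smul, norm_smul, Real.norm_eq_abs, Real.norm_eq_abs]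
      _ ≤ μ * Δ + (μ / M * Δ + μ * |τ|) * M := by
          have hΔ0 : 0 ≤ Δ := norm_nonneg _
          have h1 : |S p₂ x| * Δ ≤ μ * Δ := mul_le_mul_of_nonneg_right hS2 hΔ0
          have h2 : |S p₂ x - S p₁ s| * p₁ ≤ (μ / M * Δ + μ * |τ|) * M :=
            mul_le_mul hSdiff hp₁u (norm_nonneg _)
              (by positivity)
          linarith
      _ = 2 * μ * Δ + μ * |τ| * M := by field_simp; ring
  rcases eq_or_ne τ 0 with rfl | hτ0
  · have hxx : x = s := by rw [hx]; ring
    have : S p₂ x • Y' x - S p₁ s • Y' s = 0 := by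
      rw [hp₂, hp₁, hxx, sub_self]
    rw [this, norm_zero, ENNReal.ofReal_zero]
    exact zero_le
  -- τ ≠ 0
  have hr : 0 < |τ| := abs_pos.2 hτ0
  -- the maximal function bound on `Δ`
  have hΔmax : ENNReal.ofReal Δ ≤ ENNReal.ofReal (2 * |τ|) * maxFn Y'' x := by
    have hsub : ENNReal.ofReal Δ
        ≤ ∫⁻ u in Set.Ioc (x - |τ|) (x + |τ|), (‖Y'' u‖₊ : ℝ≥0∞) := by
      rcases le_or_gt 0 τ with hτpos | hτneg
      · have hss : s ≤ s + τ := by linarith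
        have h1 : Y' x - Y' s = ∫ u in Set.Ioc s x, Y'' u := by
          rw [hx, hFTC s (s + τ) hss, intervalIntegral.integral_of_le hss]
        have h2 : Set.Ioc s x ⊆ Set.Ioc (x - |τ|) (x + |τ|) := by
          apply Set.Ioc_subset_Ioc <;> rw [abs_of_nonneg hτpos, hx] <;> linarith
        calc ENNReal.ofReal Δ = (‖∫ u in Set.Ioc s x, Y'' u‖₊ : ℝ≥0∞) := by
              rw [hΔdef, h1, ofReal_norm, enorm_eq_nnnorm]
          _ ≤ ∫⁻ u in Set.Ioc s x, (‖Y'' u‖₊ : ℝ≥0∞) :=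
              enorm_integral_le_lintegral_enorm _
          _ ≤ _ := lintegral_mono_set h2
      · have hss : s + τ ≤ s := by linarith
        have h1 : Y' s - Y' x = ∫ u in Set.Ioc x s, Y'' u := by
          rw [hx, hFTC (s + τ) s hss, intervalIntegral.integral_of_le hss]
        have h2 : Set.Ioc x s ⊆ Set.Ioc (x - |τ|) (x + |τ|) := by
          apply Set.Ioc_subset_Ioc <;> rw [abs_of_neg hτneg, hx] <;> linarith
        calc ENNReal.ofReal Δ = (‖∫ u in Set.Ioc x s, Y'' u‖₊ : ℝ≥0∞) := by
              rw [hΔdef, ← norm_neg, neg_sub, h1, ofReal_norm, enorm_eq_nnnorm]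
          _ ≤ ∫⁻ u in Set.Ioc x s, (‖Y'' u‖₊ : ℝ≥0∞) :=
              enorm_integral_le_lintegral_enorm _
          _ ≤ _ := lintegral_mono_set h2
    have h0 : ENNReal.ofReal (2 * |τ|) ≠ 0 :=
      (ENNReal.ofReal_pos.2 (by positivity)).ne'
    have hmax : (ENNReal.ofReal (2 * |τ|))⁻¹
        * ∫⁻ u in Set.Ioc (x - |τ|) (x + |τ|), (‖Y'' u‖₊ : ℝ≥0∞) ≤ maxFn Y'' x :=
      le_iSup₂ (f := fun r (_ : 0 < r) =>
        (ENNReal.ofReal (2 * r))⁻¹ * ∫⁻ u in Set.Ioc (x - r) (x + r), (‖Y'' u‖₊ : ℝ≥0∞))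
        |τ| hr
    calc ENNReal.ofReal Δ
        ≤ ∫⁻ u in Set.Ioc (x - |τ|) (x + |τ|), (‖Y'' u‖₊ : ℝ≥0∞) := hsub
      _ = ENNReal.ofReal (2 * |τ|) * ((ENNReal.ofReal (2 * |τ|))⁻¹
            * ∫⁻ u in Set.Ioc (x - |τ|) (x + |τ|), (‖Y'' u‖₊ : ℝ≥0∞)) := by
          rw [← mul_assoc, ENNReal.mul_inv_cancel h0 ENNReal.ofReal_ne_top, one_mul]
      _ ≤ ENNReal.ofReal (2 * |τ|) * maxFn Y'' x := mul_le_mul_right hmax _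
  -- assemble in `ℝ≥0∞`
  have hkey : ENNReal.ofReal (2 * μ) * ENNReal.ofReal (2 * |τ|)
      = ENNReal.ofReal (4 * μ * |τ|) := by
    rw [← ENNReal.ofReal_mul (by positivity)]
    congr 1; ring
  calc ENNReal.ofReal ‖S p₂ x • Y' x - S p₁ s • Y' s‖
      ≤ ENNReal.ofReal (2 * μ * Δ + μ * |τ| * M) := ENNReal.ofReal_le_ofReal hreal
    _ = ENNReal.ofReal (2 * μ) * ENNReal.ofReal Δ + ENNReal.ofReal (μ * |τ| * M) := by
        rw [ENNReal.ofReal_add (by positivity) (by positivity),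
          ENNReal.ofReal_mul (by positivity)]
    _ ≤ ENNReal.ofReal (2 * μ) * (ENNReal.ofReal (2 * |τ|) * maxFn Y'' x)
          + ENNReal.ofReal (μ * |τ| * M) :=
        add_le_add_left (mul_le_mul_right hΔmax _) _
    _ = ENNReal.ofReal (4 * μ * |τ|) * maxFn Y'' x + ENNReal.ofReal (μ * |τ| * M) := by
        rw [← mul_assoc, hkey]
    _ ≤ ENNReal.ofReal (4 * μ * |τ|) * maxFn Y'' x
          + ENNReal.ofReal (4 * μ * |τ|) * ENNReal.ofReal M := by
        refine add_le_add_right ?_ _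
        rw [← ENNReal.ofReal_mul (by positivity)]
        exact ENNReal.ofReal_le_ofReal (by nlinarith [mul_nonneg (mul_nonneg hμ0.le hr.le) hMpos.le])
    _ ≤ ENNReal.ofReal (4 * μ * |τ|) * (ENNReal.ofReal M + Rfn Y'' x) := by
        rw [mul_add, add_comm]
        refine add_le_add_right (mul_le_mul_right ?_ _) _
        exact le_trans (self_le_add_right _ _) (le_of_eq rfl)
end
end

section
/- Let Y : ℝ → ℝ² be 2π-periodic and continuously differentiable, with Y' Hölder continuous of exponent 1/2 (i.e. there is H > 0 with |Y'(a) − Y'(b)| ≤ H |a − b|^{1/2} for all a, b), satisfying the well-stretched condition with constant λ > 0. Let h : (0,∞) → ℝ be continuous and bounded. Then for every s ∈ ℝ: lim_{η → 0⁺} ∫_{η ≤ |τ| ≤ π} [ Y'(s+τ)·(Y(s+τ) − Y(s)) / |Y(s+τ) − Y(s)|² ] · h(|Y(s+τ) − Y(s)|) dτ = 0. -/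
open MeasureTheory Real Filter Topology
open scoped RealInnerProductSpace ENNReal

noncomputable section

/-- Vanishing of the principal-value term `E_{2,1}`:
for a well-stretched string `Y` with `C^{1,1/2}` regularity and any bounded continuous
`h : (0,∞) → ℝ`, the symmetric principal value of
`[Y'(s+τ)·(Y(s+τ)−Y(s)) / |Y(s+τ)−Y(s)|²] h(|Y(s+τ)−Y(s)|)` is zero. -/
theorem statement11
    (Y Y' : ℝ → E2) (lam H : ℝ)
    (hlam : 0 < lam) (hH : 0 < H)
    (hper : Function.Periodic Y (2 * π))
    (hder : ∀ s, HasDerivAt Y (Y' s) s)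
    (hcont : Continuous Y')
    (hHolder : ∀ a b : ℝ, ‖Y' a - Y' b‖ ≤ H * |a - b| ^ ((1 : ℝ) / 2))
    (hws : ∀ s₁ s₂ : ℝ, |s₁ - s₂| ≤ π → lam * |s₁ - s₂| ≤ ‖Y s₁ - Y s₂‖)
    (h : ℝ → ℝ)
    (hhc : ContinuousOn h (Set.Ioi 0))
    (hhb : ∃ K : ℝ, ∀ r : ℝ, 0 < r → |h r| ≤ K) :
    ∀ s : ℝ,
      Filter.Tendsto
        (fun η : ℝ =>
          ∫ τ in {τ : ℝ | η ≤ |τ| ∧ |τ| ≤ π},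
            ⟪Y' (s + τ), Y (s + τ) - Y s⟫ / ‖Y (s + τ) - Y s‖ ^ 2 *
              h ‖Y (s + τ) - Y s‖)
        (nhdsWithin 0 (Set.Ioi 0)) (nhds 0) := by
  intro s
  obtain ⟨K, hK⟩ := hhb
  have hK0 : 0 ≤ K := le_trans (abs_nonneg _) (hK 1 one_pos)
  set Δ : ℝ → E2 := fun τ => Y (s + τ) - Y s with hΔdef
  set g : ℝ → ℝ := fun u => h (Real.sqrt u) / (2 * u) with hgdef
  set Φ : ℝ → ℝ := fun x => ∫ u in (1:ℝ)..x, g u with hΦdef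
  set f : ℝ → ℝ := fun τ => ⟪Y' (s + τ), Δ τ⟫ / ‖Δ τ‖ ^ 2 * h ‖Δ τ‖ with hfdef
  -- positivity from well-stretched
  have hpos : ∀ τ : ℝ, τ ≠ 0 → |τ| ≤ π → lam * |τ| ≤ ‖Δ τ‖ := by
    intro τ hτ hτπ
    have := hws (s + τ) s (by simpa using hτπ)
    simpa [hΔdef] using this
  have hpos' : ∀ τ : ℝ, τ ≠ 0 → |τ| ≤ π → 0 < ‖Δ τ‖ := by
    intro τ hτ hτπ
    have h1 : 0 < lam * |τ| := mul_pos hlam (abs_pos.mpr hτ)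
    linarith [hpos τ hτ hτπ]
  -- derivative of Δ
  have hΔderiv : ∀ τ : ℝ, HasDerivAt Δ (Y' (s + τ)) τ := by
    intro τ
    have hadd : HasDerivAt (fun x : ℝ => s + x) 1 τ := by
      simpa using (hasDerivAt_id τ).const_add s
    have h1 : HasDerivAt (fun τ : ℝ => Y (s + τ)) (Y' (s + τ)) τ := by
      have := (hder (s + τ)).scomp τ hadd
      rw [one_smul] at this
      exact this
    simpa [hΔdef] using h1.sub_const (Y s)
  have hΔcont : Continuous Δ := by
    exact continuous_iff_continuousAt.mpr fun τ => (hΔderiv τ).continuousAt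
  -- derivative of q = ‖Δ‖²
  have hqderiv : ∀ τ : ℝ, HasDerivAt (fun t => ‖Δ t‖ ^ 2) (2 * ⟪Y' (s + τ), Δ τ⟫) τ := by
    intro τ
    have h1 := (hΔderiv τ).inner ℝ (hΔderiv τ)
    have h2 : ∀ t : ℝ, ⟪Δ t, Δ t⟫ = ‖Δ t‖ ^ 2 := fun t => real_inner_self_eq_norm_sq _
    have h3 : (⟪Δ τ, Y' (s + τ)⟫ + ⟪Y' (s + τ), Δ τ⟫ : ℝ) = 2 * ⟪Y' (s + τ), Δ τ⟫ := by
      rw [real_inner_comm]; ring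
    rw [← h3]
    exact h1.congr_deriv rfl |>.congr_of_eventuallyEq (Filter.Eventually.of_forall fun t => (h2 t).symm)
  -- continuity of g on (0, ∞)
  have hgcont : ContinuousOn g (Set.Ioi 0) := by
    apply ContinuousOn.div
    · exact hhc.comp Real.continuous_sqrt.continuousOn fun u hu => Real.sqrt_pos.mpr hu
    · exact (continuous_const.mul continuous_id).continuousOn
    · intro u hu
      have : (0:ℝ) < u := hu
      positivity
  -- derivative of Φ
  have hΦderiv : ∀ x : ℝ, 0 < x → HasDerivAt Φ (g x) x := by
    intro x hx
    apply intervalIntegral.integral_hasDerivAt_right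
    · apply ContinuousOn.intervalIntegrable
      apply hgcont.mono
      intro u hu
      rcases Set.mem_uIcc.mp hu with ⟨h1, _⟩ | ⟨h1, _⟩
      · exact lt_of_lt_of_le one_pos h1
      · exact lt_of_lt_of_le hx h1
    · exact hgcont.stronglyMeasurableAtFilter isOpen_Ioi x hx
    · exact hgcont.continuousAt (Ioi_mem_nhds hx)
  -- key derivative identity
  have hkey : ∀ τ : ℝ, τ ≠ 0 → |τ| ≤ π →
      HasDerivAt (fun t => Φ (‖Δ t‖ ^ 2)) (f τ) τ := by
    intro τ h0 hπ'
    have hr := hpos' τ h0 hπ'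
    have hq : (0:ℝ) < ‖Δ τ‖ ^ 2 := by positivity
    have hc := (hΦderiv _ hq).comp τ (hqderiv τ)
    have heq : g (‖Δ τ‖ ^ 2) * (2 * ⟪Y' (s + τ), Δ τ⟫) = f τ := by
      have hsq : Real.sqrt (‖Δ τ‖ ^ 2) = ‖Δ τ‖ := Real.sqrt_sq (norm_nonneg _)
      simp only [hgdef, hfdef, hsq]
      have hne : (‖Δ τ‖ : ℝ) ^ 2 ≠ 0 := ne_of_gt hq
      field_simp
    rw [← heq]
    exact hc
  -- continuity of the integrand
  have hfcont : ContinuousOn f {τ : ℝ | 0 < ‖Δ τ‖} := by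
    have hin : Continuous fun τ => (⟪Y' (s + τ), Δ τ⟫ : ℝ) :=
      (hcont.comp (continuous_const.add continuous_id)).inner hΔcont
    apply ContinuousOn.mul
    · apply ContinuousOn.div hin.continuousOn
      · exact (hΔcont.norm.pow 2).continuousOn
      · intro τ hτ
        have : (0:ℝ) < ‖Δ τ‖ := hτ
        positivity
    · exact hhc.comp hΔcont.norm.continuousOn fun τ hτ => hτ
  -- the main identity for 0 < η < π
  have hπpos : (0:ℝ) < π := Real.pi_pos
  have hint : ∀ η : ℝ, 0 < η → η < π →
      (∫ τ in {τ : ℝ | η ≤ |τ| ∧ |τ| ≤ π}, f τ) = Φ (‖Δ (-η)‖ ^ 2) - Φ (‖Δ η‖ ^ 2) := by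
    intro η h0 hηπ
    have hset : {τ : ℝ | η ≤ |τ| ∧ |τ| ≤ π} = Set.Icc (-π) (-η) ∪ Set.Icc η π := by
      ext τ
      simp only [Set.mem_setOf_eq, Set.mem_union, Set.mem_Icc, abs_le, le_abs]
      constructor
      · rintro ⟨h1 | h1, h2, h3⟩
        · right; exact ⟨h1, h3⟩
        · left; constructor <;> linarith
      · rintro (⟨h1, h2⟩ | ⟨h1, h2⟩)
        · exact ⟨Or.inr (by linarith), by linarith, by linarith⟩
        · exact ⟨Or.inl h1, by linarith, by linarith⟩
    have hsub1 : Set.Icc (-π) (-η) ⊆ {τ : ℝ | 0 < ‖Δ τ‖} := by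
      intro τ ⟨h1, h2⟩
      exact hpos' τ (by linarith) (abs_le.mpr ⟨h1, by linarith⟩)
    have hsub2 : Set.Icc η π ⊆ {τ : ℝ | 0 < ‖Δ τ‖} := by
      intro τ ⟨h1, h2⟩
      exact hpos' τ (by linarith) (abs_le.mpr ⟨by linarith, h2⟩)
    have hi1 : IntegrableOn f (Set.Icc (-π) (-η)) := (hfcont.mono hsub1).integrableOn_Icc
    have hi2 : IntegrableOn f (Set.Icc η π) := (hfcont.mono hsub2).integrableOn_Icc
    have hdisj : Disjoint (Set.Icc (-π) (-η)) (Set.Icc η π) := by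
      rw [Set.disjoint_left]
      rintro τ ⟨_, h2⟩ ⟨h3, _⟩; linarith
    rw [hset, setIntegral_union hdisj measurableSet_Icc hi1 hi2]
    have hI1 : (∫ τ in Set.Icc (-π) (-η), f τ) = ∫ τ in (-π)..(-η), f τ := by
      rw [intervalIntegral.integral_of_le (by linarith), ← integral_Icc_eq_integral_Ioc]
    have hI2 : (∫ τ in Set.Icc η π, f τ) = ∫ τ in η..π, f τ := by
      rw [intervalIntegral.integral_of_le (by linarith), ← integral_Icc_eq_integral_Ioc]
    have hu1 : Set.uIcc (-π) (-η) = Set.Icc (-π) (-η) := Set.uIcc_of_le (by linarith)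
    have hu2 : Set.uIcc η π = Set.Icc η π := Set.uIcc_of_le (by linarith)
    have hE1 : (∫ τ in (-π)..(-η), f τ) = Φ (‖Δ (-η)‖ ^ 2) - Φ (‖Δ (-π)‖ ^ 2) := by
      refine intervalIntegral.integral_eq_sub_of_hasDerivAt
        (f := fun t => Φ (‖Δ t‖ ^ 2)) (fun τ hτ => ?_)
        ((hfcont.mono hsub1).intervalIntegrable_of_Icc (by linarith))
      rw [hu1] at hτ
      obtain ⟨h1, h2⟩ := hτ
      exact hkey τ (by linarith) (abs_le.mpr ⟨h1, by linarith⟩)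
    have hE2 : (∫ τ in η..π, f τ) = Φ (‖Δ π‖ ^ 2) - Φ (‖Δ η‖ ^ 2) := by
      refine intervalIntegral.integral_eq_sub_of_hasDerivAt
        (f := fun t => Φ (‖Δ t‖ ^ 2)) (fun τ hτ => ?_)
        ((hfcont.mono hsub2).intervalIntegrable_of_Icc (by linarith))
      rw [hu2] at hτ
      obtain ⟨h1, h2⟩ := hτ
      exact hkey τ (by linarith) (abs_le.mpr ⟨by linarith, h2⟩)
    have hperiodic : Δ (-π) = Δ π := by
      have := hper (s - π)
      have heq : s - π + 2 * π = s + π := by ring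
      rw [heq] at this
      simp only [hΔdef]
      rw [show s + -π = s - π by ring, this]
    rw [hI1, hI2, hE1, hE2, hperiodic]
    ring
  -- the log bound for Φ
  have hΦint : ∀ x : ℝ, 0 < x → IntervalIntegrable g volume 1 x := by
    intro x hx
    apply ContinuousOn.intervalIntegrable
    apply hgcont.mono
    intro u hu
    rcases Set.mem_uIcc.mp hu with ⟨h1, _⟩ | ⟨h1, _⟩
    · exact lt_of_lt_of_le one_pos h1
    · exact lt_of_lt_of_le hx h1
  have hΦsub : ∀ a b : ℝ, 0 < a → 0 < b → Φ a - Φ b = ∫ u in b..a, g u := by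
    intro a b ha hb
    exact intervalIntegral.integral_interval_sub_left (hΦint a ha) (hΦint b hb)
  have hbound_ord : ∀ a b : ℝ, 0 < b → b ≤ a →
      |∫ u in b..a, g u| ≤ K / 2 * (Real.log a - Real.log b) := by
    intro a b hb hba
    have ha : 0 < a := lt_of_lt_of_le hb hba
    have hsubset : Set.Icc b a ⊆ Set.Ioi (0:ℝ) := fun u hu => lt_of_lt_of_le hb hu.1
    have hgi : IntervalIntegrable g volume b a :=
      (hgcont.mono hsubset).intervalIntegrable_of_Icc hba
    have hgi' : IntervalIntegrable (fun u => |g u|) volume b a := hgi.abs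
    have hci : IntervalIntegrable (fun u => K / 2 * (1 / u)) volume b a := by
      apply ContinuousOn.intervalIntegrable_of_Icc hba
      apply ContinuousOn.mul continuousOn_const
      apply ContinuousOn.div continuousOn_const continuousOn_id
      intro u hu; exact ne_of_gt (lt_of_lt_of_le hb hu.1)
    calc |∫ u in b..a, g u| ≤ ∫ u in b..a, |g u| :=
          intervalIntegral.abs_integral_le_integral_abs hba
      _ ≤ ∫ u in b..a, K / 2 * (1 / u) := by
          apply intervalIntegral.integral_mono_on hba hgi' hci
          intro u hu
          have hu0 : 0 < u := lt_of_lt_of_le hb hu.1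
          have : |g u| = |h (Real.sqrt u)| / (2 * u) := by
            rw [hgdef]
            rw [abs_div, abs_of_pos (by positivity : (0:ℝ) < 2 * u)]
          rw [this]
          rw [div_le_iff₀ (by positivity : (0:ℝ) < 2 * u)]
          have := hK (Real.sqrt u) (Real.sqrt_pos.mpr hu0)
          calc |h (Real.sqrt u)| ≤ K := this
            _ = K / 2 * (1 / u) * (2 * u) := by field_simp
      _ = K / 2 * (Real.log a - Real.log b) := by
          rw [intervalIntegral.integral_const_mul, integral_one_div]
          · rw [Real.log_div (ne_of_gt ha) (ne_of_gt hb)]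
          · intro hc
            rw [Set.mem_uIcc] at hc
            rcases hc with ⟨h1, _⟩ | ⟨h1, _⟩ <;> linarith
  have hΦbound : ∀ a b : ℝ, 0 < a → 0 < b →
      |Φ a - Φ b| ≤ K / 2 * |Real.log a - Real.log b| := by
    intro a b ha hb
    rcases le_total b a with hba | hab
    · rw [hΦsub a b ha hb]
      calc |∫ u in b..a, g u| ≤ K / 2 * (Real.log a - Real.log b) := hbound_ord a b hb hba
        _ ≤ K / 2 * |Real.log a - Real.log b| := by
            apply mul_le_mul_of_nonneg_left (le_abs_self _) (by positivity)
    · rw [abs_sub_comm, hΦsub b a hb ha]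
      calc |∫ u in a..b, g u| ≤ K / 2 * (Real.log b - Real.log a) := hbound_ord b a ha hab
        _ ≤ K / 2 * |Real.log a - Real.log b| := by
            rw [abs_sub_comm]
            apply mul_le_mul_of_nonneg_left (le_abs_self _) (by positivity)
  -- Taylor estimate
  have htaylor : ∀ τ : ℝ, ‖Δ τ - τ • Y' s‖ ≤ H * Real.sqrt |τ| * |τ| := by
    intro τ
    have hYi : IntervalIntegrable (fun u => Y' (s + u)) volume 0 τ :=
      (hcont.comp (continuous_const.add continuous_id)).intervalIntegrable 0 τ
    have hYsi : IntervalIntegrable (fun _ : ℝ => Y' s) volume 0 τ :=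
      intervalIntegrable_const
    have hFTC : (∫ u in (0:ℝ)..τ, Y' (s + u)) = Δ τ := by
      have := intervalIntegral.integral_eq_sub_of_hasDerivAt
        (f := Δ) (f' := fun u => Y' (s + u)) (a := 0) (b := τ)
        (fun u _ => hΔderiv u) hYi
      rw [this]
      simp [hΔdef]
    have hconst : (∫ _ in (0:ℝ)..τ, Y' s) = τ • Y' s := by
      simp
    have hdiff : Δ τ - τ • Y' s = ∫ u in (0:ℝ)..τ, (Y' (s + u) - Y' s) := by
      rw [intervalIntegral.integral_sub hYi hYsi, hFTC, hconst]
    rw [hdiff]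
    have hb : ∀ u ∈ Set.uIoc (0:ℝ) τ, ‖Y' (s + u) - Y' s‖ ≤ H * Real.sqrt |τ| := by
      intro u hu
      have huτ : |u| ≤ |τ| := by
        obtain ⟨h1, h2⟩ := hu
        rw [abs_le]
        constructor
        · have : -|τ| ≤ min 0 τ :=
            le_min (neg_nonpos.mpr (abs_nonneg τ)) (neg_abs_le τ)
          exact le_of_lt (lt_of_le_of_lt this h1)
        · exact le_trans h2 (max_le (abs_nonneg τ) (le_abs_self τ))
      have := hHolder (s + u) s
      have heq : s + u - s = u := by ring
      rw [heq] at this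
      apply le_trans this
      apply mul_le_mul_of_nonneg_left _ (le_of_lt hH)
      rw [Real.sqrt_eq_rpow]
      exact Real.rpow_le_rpow (abs_nonneg _) huτ (by norm_num)
    calc ‖∫ u in (0:ℝ)..τ, (Y' (s + u) - Y' s)‖
        ≤ H * Real.sqrt |τ| * |τ - 0| :=
          intervalIntegral.norm_integral_le_of_norm_le_const hb
      _ = H * Real.sqrt |τ| * |τ| := by rw [sub_zero]
  -- ratio estimate
  have hratio_bound : ∀ η : ℝ, 0 < η → η < π →
      |‖Δ (-η)‖ / ‖Δ η‖ - 1| ≤ 2 * H / lam * Real.sqrt η := by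
    intro η h0 hηπ
    have habsη : |η| = η := abs_of_pos h0
    have habsnegη : |(-η : ℝ)| = η := by rw [abs_neg, habsη]
    have hr1 : lam * η ≤ ‖Δ η‖ := by
      have := hpos η (ne_of_gt h0) (by rw [habsη]; linarith)
      rwa [habsη] at this
    have hr2 : lam * η ≤ ‖Δ (-η)‖ := by
      have := hpos (-η) (by simp [ne_of_gt h0]) (by rw [habsnegη]; linarith)
      rwa [habsnegη] at this
    have hrpos : 0 < ‖Δ η‖ := lt_of_lt_of_le (by positivity) hr1
    have ht1 : |‖Δ η‖ - η * ‖Y' s‖| ≤ H * Real.sqrt η * η := by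
      have := htaylor η
      rw [habsη] at this
      have hnorm : ‖η • Y' s‖ = η * ‖Y' s‖ := by
        rw [norm_smul, Real.norm_eq_abs, habsη]
      calc |‖Δ η‖ - η * ‖Y' s‖| = |‖Δ η‖ - ‖η • Y' s‖| := by rw [hnorm]
        _ ≤ ‖Δ η - η • Y' s‖ := abs_norm_sub_norm_le _ _
        _ ≤ H * Real.sqrt η * η := this
    have ht2 : |‖Δ (-η)‖ - η * ‖Y' s‖| ≤ H * Real.sqrt η * η := by
      have := htaylor (-η)
      rw [habsnegη] at this
      have hnorm : ‖(-η) • Y' s‖ = η * ‖Y' s‖ := by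
        rw [norm_smul, Real.norm_eq_abs, habsnegη]
      calc |‖Δ (-η)‖ - η * ‖Y' s‖| = |‖Δ (-η)‖ - ‖(-η) • Y' s‖| := by rw [hnorm]
        _ ≤ ‖Δ (-η) - (-η) • Y' s‖ := abs_norm_sub_norm_le _ _
        _ ≤ H * Real.sqrt η * η := this
    have hdiff : |‖Δ (-η)‖ - ‖Δ η‖| ≤ 2 * (H * Real.sqrt η * η) := by
      calc |‖Δ (-η)‖ - ‖Δ η‖|
          = |(‖Δ (-η)‖ - η * ‖Y' s‖) - (‖Δ η‖ - η * ‖Y' s‖)| := by ring_nf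
        _ ≤ |‖Δ (-η)‖ - η * ‖Y' s‖| + |‖Δ η‖ - η * ‖Y' s‖| := abs_sub _ _
        _ ≤ 2 * (H * Real.sqrt η * η) := by linarith
    rw [abs_sub_comm] at hdiff ⊢
    have heq1 : (1 : ℝ) - ‖Δ (-η)‖ / ‖Δ η‖ = (‖Δ η‖ - ‖Δ (-η)‖) / ‖Δ η‖ := by
      field_simp
    rw [heq1, abs_div, abs_of_pos hrpos, div_le_iff₀ hrpos]
    calc |‖Δ η‖ - ‖Δ (-η)‖| ≤ 2 * (H * Real.sqrt η * η) := hdiff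
      _ ≤ 2 * H / lam * Real.sqrt η * ‖Δ η‖ := by
          have h1 : 2 * H / lam * Real.sqrt η * (lam * η) = 2 * (H * Real.sqrt η * η) := by
            field_simp
          rw [← h1]
          apply mul_le_mul_of_nonneg_left hr1
          positivity
  -- ratio tends to 1
  have hmem : Set.Ioo (0:ℝ) π ∈ nhdsWithin 0 (Set.Ioi 0) :=
    Ioo_mem_nhdsGT_of_mem (by constructor <;> [exact le_rfl; exact hπpos])
  have hsqrt0 : Tendsto (fun η : ℝ => 2 * H / lam * Real.sqrt η)
      (nhdsWithin 0 (Set.Ioi 0)) (nhds 0) := by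
    have : Tendsto (fun η : ℝ => 2 * H / lam * Real.sqrt η) (nhds 0) (nhds (2 * H / lam * Real.sqrt 0)) :=
      (continuous_const.mul Real.continuous_sqrt).tendsto 0
    simpa using this.mono_left nhdsWithin_le_nhds
  have hratio : Tendsto (fun η : ℝ => ‖Δ (-η)‖ / ‖Δ η‖)
      (nhdsWithin 0 (Set.Ioi 0)) (nhds 1) := by
    have h0 : Tendsto (fun η : ℝ => ‖Δ (-η)‖ / ‖Δ η‖ - 1)
        (nhdsWithin 0 (Set.Ioi 0)) (nhds 0) := by
      apply squeeze_zero_norm' _ hsqrt0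
      filter_upwards [hmem] with η hη
      exact hratio_bound η hη.1 hη.2
    have := h0.add (tendsto_const_nhds (x := (1:ℝ)))
    simpa using this
  -- bound function tends to 0
  have hlogtendsto : Tendsto (fun η : ℝ => K * |Real.log (‖Δ (-η)‖ / ‖Δ η‖)|)
      (nhdsWithin 0 (Set.Ioi 0)) (nhds 0) := by
    have hlog : Tendsto (fun η : ℝ => Real.log (‖Δ (-η)‖ / ‖Δ η‖))
        (nhdsWithin 0 (Set.Ioi 0)) (nhds 0) := by
      have := (Real.continuousAt_log one_ne_zero).tendsto.comp hratio
      simpa [Function.comp_def] using this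
    have := (hlog.abs).const_mul K
    simpa using this
  -- final squeeze
  apply squeeze_zero_norm' _ hlogtendsto
  filter_upwards [hmem] with η hη
  obtain ⟨h0, hηπ⟩ := hη
  have habsη : |η| = η := abs_of_pos h0
  have habsnegη : |(-η : ℝ)| = η := by rw [abs_neg, habsη]
  have hrp : 0 < ‖Δ η‖ := hpos' η (ne_of_gt h0) (by rw [habsη]; linarith)
  have hrn : 0 < ‖Δ (-η)‖ := hpos' (-η) (by simp [ne_of_gt h0]) (by rw [habsnegη]; linarith)
  rw [Real.norm_eq_abs]
  have hFeq : (∫ τ in {τ : ℝ | η ≤ |τ| ∧ |τ| ≤ π},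
      ⟪Y' (s + τ), Y (s + τ) - Y s⟫ / ‖Y (s + τ) - Y s‖ ^ 2 * h ‖Y (s + τ) - Y s‖)
      = Φ (‖Δ (-η)‖ ^ 2) - Φ (‖Δ η‖ ^ 2) := hint η h0 hηπ
  rw [hFeq]
  have hb := hΦbound (‖Δ (-η)‖ ^ 2) (‖Δ η‖ ^ 2) (by positivity) (by positivity)
  apply le_trans hb
  have hlogeq : Real.log (‖Δ (-η)‖ ^ 2) - Real.log (‖Δ η‖ ^ 2)
      = 2 * (Real.log (‖Δ (-η)‖ / ‖Δ η‖)) := by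
    rw [Real.log_pow, Real.log_pow, Real.log_div (ne_of_gt hrn) (ne_of_gt hrp)]
    push_cast
    ring
  rw [hlogeq, abs_mul, abs_two]
  calc K / 2 * (2 * |Real.log (‖Δ (-η)‖ / ‖Δ η‖)|)
      = K * |Real.log (‖Δ (-η)‖ / ‖Δ η‖)| := by ring
    _ ≤ K * |Real.log (‖Δ (-η)‖ / ‖Δ η‖)| := le_rfl
end
end

section
/- There is a universal constant C > 0 with the following property. Let l ≥ 0 be a real number, T > 0, and let n₁ < n₂ be integers with n₁ ≥ 1. For each k ∈ ℤ with n₁ < |k| ≤ n₂ let a_k : [0,T] → ℂ be continuous. Then for every t ∈ [0,T]: Σ_{k ∈ ℤ, n₁ < |k| ≤ n₂} |k|^{2(l+1)} | ∫_0^t e^{−|k|(t−t')/4} a_k(t') dt' |² ≤ C (1 + log(n₂/n₁)) · sup_{t' ∈ [0,T]} Σ_{k ∈ ℤ, n₁ < |k| ≤ n₂} |k|^{2l} |a_k(t')|². -/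
open MeasureTheory Real Filter Topology

private lemma mul_exp_neg_le_one' {u : ℝ} : u * Real.exp (-u) ≤ 1 := by
  have h : u ≤ Real.exp u := by linarith [Real.add_one_le_exp u, Real.exp_pos u]
  have h2 : 0 ≤ Real.exp (-u) := (Real.exp_pos _).le
  calc u * Real.exp (-u) ≤ Real.exp u * Real.exp (-u) := by nlinarith
    _ = 1 := by rw [← Real.exp_add]; simp

private lemma exp_half_lt_two' : Real.exp (1/2) < 2 := by
  have h1 : Real.exp 1 < 2.7182818286 := Real.exp_one_lt_d9
  have h2 : Real.exp (1/2) * Real.exp (1/2) = Real.exp 1 := by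
    rw [← Real.exp_add]; norm_num
  nlinarith [Real.exp_pos (1/2)]

private lemma kernel_bound' {n₁ n₂ x s : ℝ} (h1 : 1 ≤ n₁) (hx1 : n₁ ≤ x) (hx2 : x ≤ n₂)
    (hs : 0 ≤ s) :
    x * Real.exp (-(x / 4 * s)) ≤
      (if s ≤ 4 / n₂ then n₂ else if s ≤ 4 / n₁ then 4 / s
        else 2 * n₁ * Real.exp (-(n₁ * s) / 8)) := by
  have hn1 : 0 < n₁ := by linarith
  have hn2 : 0 < n₂ := by linarith
  have hx0 : 0 < x := by linarith
  split_ifs with hA hB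
  · calc x * Real.exp (-(x / 4 * s)) ≤ x * 1 :=
        mul_le_mul_of_nonneg_left (Real.exp_le_one_iff.mpr (by nlinarith)) hx0.le
      _ ≤ n₂ := by linarith
  · have hs0 : 0 < s := lt_of_le_of_lt (by positivity) (not_le.mp hA)
    have key := mul_exp_neg_le_one' (u := x / 4 * s)
    rw [le_div_iff₀ hs0]
    nlinarith [Real.exp_pos (-(x / 4 * s))]
  · have hs0 : 0 < s := lt_of_le_of_lt (by positivity) (not_le.mp hB)
    have hsplit : Real.exp (-(x / 4 * s)) =
        Real.exp (-(x / 8 * s)) * Real.exp (-(x / 8 * s)) := by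
      rw [← Real.exp_add]; ring_nf
    have h8 : x * Real.exp (-(x / 8 * s)) ≤ 8 / s := by
      have key := mul_exp_neg_le_one' (u := x / 8 * s)
      rw [le_div_iff₀ hs0]
      nlinarith [Real.exp_pos (-(x / 8 * s))]
    have h8' : (8:ℝ) / s ≤ 2 * n₁ := by
      rw [div_le_iff₀ hs0]
      have : 4 / n₁ ≤ s := (not_le.mp hB).le
      rw [div_le_iff₀ hn1] at this
      nlinarith
    have hmono : Real.exp (-(x / 8 * s)) ≤ Real.exp (-(n₁ * s) / 8) := by
      apply Real.exp_le_exp.mpr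
      rw [neg_div]
      nlinarith
    calc x * Real.exp (-(x / 4 * s))
        = (x * Real.exp (-(x / 8 * s))) * Real.exp (-(x / 8 * s)) := by
          rw [hsplit]; ring
      _ ≤ (2 * n₁) * Real.exp (-(n₁ * s) / 8) := by
          apply mul_le_mul (h8.trans h8') hmono (Real.exp_pos _).le (by positivity)

private lemma exp_integral_le' {c a b : ℝ} (hc : 0 < c) (ha : 0 ≤ a) :
    ∫ s in a..b, Real.exp (-(c * s)) ≤ 1 / c := by
  have hderiv : ∀ u ∈ Set.uIcc a b, HasDerivAt (fun s => -c⁻¹ * Real.exp (-(c * s)))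
      (Real.exp (-(c * u))) u := by
    intro u _
    have h1 : HasDerivAt (fun s : ℝ => -(c * s)) (-c) u := by
      have h := ((hasDerivAt_id u).const_mul c).neg; rw [mul_one] at h; exact h
    have h2 := (h1.exp).const_mul (-c⁻¹)
    refine h2.congr_deriv ?_
    rw [show -c⁻¹ * (Real.exp (-(c * u)) * -c) = (c⁻¹ * c) * Real.exp (-(c * u)) by ring,
      inv_mul_cancel₀ hc.ne', one_mul]
  rw [intervalIntegral.integral_eq_sub_of_hasDerivAt hderiv
    ((Real.continuous_exp.comp (by continuity)).intervalIntegrable a b)]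
  have h1 : Real.exp (-(c * a)) ≤ 1 := Real.exp_le_one_iff.mpr (by nlinarith)
  have h2 : 0 < Real.exp (-(c * b)) := Real.exp_pos _
  have hc' : 0 < c⁻¹ := by positivity
  rw [one_div]
  nlinarith

private lemma exp_kernel_integral' {c t : ℝ} (hc : 0 < c) (ht : 0 ≤ t) :
    ∫ u in (0:ℝ)..t, Real.exp (-(c * (t - u))) ≤ 1 / c := by
  have := intervalIntegral.integral_comp_sub_left (fun s => Real.exp (-(c * s))) t
    (a := 0) (b := t)
  simp only [sub_self, sub_zero] at this
  rw [this]
  exact exp_integral_le' hc le_rfl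

private lemma cs_bound' {t p : ℝ} (ht : 0 ≤ t) {g : ℝ → ℝ} (hg : Continuous g)
    (hgpos : ∀ u, 0 ≤ g u) (hp : (∫ u in (0:ℝ)..t, g u) ≤ p) {a : ℝ → ℂ}
    (ha : ContinuousOn a (Set.Icc 0 t)) :
    ‖∫ u in (0:ℝ)..t, g u • a u‖ ^ 2 ≤ p * ∫ u in (0:ℝ)..t, g u * ‖a u‖ ^ 2 := by
  have huIcc : Set.uIcc (0:ℝ) t = Set.Icc 0 t := Set.uIcc_of_le ht
  have hna : ContinuousOn (fun u => ‖a u‖) (Set.uIcc (0:ℝ) t) := by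
    rw [huIcc]; exact ha.norm
  have hgint : IntervalIntegrable g volume 0 t := hg.intervalIntegrable 0 t
  have hX : IntervalIntegrable (fun u => g u * ‖a u‖) volume 0 t :=
    (hg.continuousOn.mul hna).intervalIntegrable
  have hJint : IntervalIntegrable (fun u => g u * ‖a u‖ ^ 2) volume 0 t :=
    (hg.continuousOn.mul (hna.pow 2)).intervalIntegrable
  set P := ∫ u in (0:ℝ)..t, g u with hPdef
  set X := ∫ u in (0:ℝ)..t, g u * ‖a u‖ with hXdef
  set J := ∫ u in (0:ℝ)..t, g u * ‖a u‖ ^ 2 with hJdef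
  have hP0 : 0 ≤ P := intervalIntegral.integral_nonneg ht fun u _ => hgpos u
  have hJ0 : 0 ≤ J := intervalIntegral.integral_nonneg ht
    (fun u _ => mul_nonneg (hgpos u) (by positivity))
  have hquad : ∀ L : ℝ, 0 ≤ P * (L * L) + (-(2 * X)) * L + J := by
    intro L
    have hexp : (fun u => g u * (L - ‖a u‖) ^ 2)
        = fun u => L ^ 2 * g u - 2 * L * (g u * ‖a u‖) + g u * ‖a u‖ ^ 2 := by
      funext u; ring
    have hI : (0:ℝ) ≤ ∫ u in (0:ℝ)..t, g u * (L - ‖a u‖) ^ 2 :=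
      intervalIntegral.integral_nonneg ht fun u _ => mul_nonneg (hgpos u) (sq_nonneg _)
    rw [hexp, intervalIntegral.integral_add ((hgint.const_mul _).sub (hX.const_mul _)) hJint,
        intervalIntegral.integral_sub (hgint.const_mul _) (hX.const_mul _),
        intervalIntegral.integral_const_mul, intervalIntegral.integral_const_mul] at hI
    nlinarith [hI]
  have hXP : X ^ 2 ≤ P * J := by
    have hd := discrim_le_zero hquad
    rw [discrim] at hd
    nlinarith [hd]
  have hnorm : ‖∫ u in (0:ℝ)..t, g u • a u‖ ≤ X := by
    calc ‖∫ u in (0:ℝ)..t, g u • a u‖ ≤ ∫ u in (0:ℝ)..t, ‖g u • a u‖ :=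
          intervalIntegral.norm_integral_le_integral_norm ht
      _ = X := by
          apply intervalIntegral.integral_congr
          intro u _
          simp [norm_smul, abs_of_nonneg (hgpos u)]
  calc ‖∫ u in (0:ℝ)..t, g u • a u‖ ^ 2 ≤ X ^ 2 := by
        nlinarith [norm_nonneg (∫ u in (0:ℝ)..t, g u • a u)]
    _ ≤ P * J := hXP
    _ ≤ p * J := mul_le_mul_of_nonneg_right hp hJ0

private noncomputable def psi (n₁ n₂ s : ℝ) : ℝ :=
  if s ≤ 4 / n₂ then n₂ else if s ≤ 4 / n₁ then 4 / s
    else 2 * n₁ * Real.exp (-(n₁ * s) / 8)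

private lemma psi_nonneg {n₁ n₂ : ℝ} (h1 : 1 ≤ n₁) (h12 : n₁ ≤ n₂) (s : ℝ) :
    0 ≤ psi n₁ n₂ s := by
  have hn1 : 0 < n₁ := by linarith
  have hn2 : 0 < n₂ := by linarith
  unfold psi
  split_ifs with hA hB
  · linarith
  · have : 0 < s := lt_of_le_of_lt (by positivity) (not_le.mp hA)
    positivity
  · positivity

private lemma psi_le {n₁ n₂ : ℝ} (h1 : 1 ≤ n₁) (h12 : n₁ ≤ n₂) (s : ℝ) :
    psi n₁ n₂ s ≤ 2 * n₂ := by
  have hn1 : 0 < n₁ := by linarith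
  have hn2 : 0 < n₂ := by linarith
  unfold psi
  split_ifs with hA hB
  · linarith
  · have hs0 : 4 / n₂ < s := not_le.mp hA
    have : 4 / s ≤ n₂ := by
      rw [div_le_iff₀ (lt_of_le_of_lt (by positivity) hs0)]
      rw [div_lt_iff₀ hn2] at hs0
      nlinarith
    linarith
  · have : Real.exp (-(n₁ * s) / 8) ≤ 1 := by
      apply Real.exp_le_one_iff.mpr
      have : 4 / n₁ < s := not_le.mp hB
      have hs0 : 0 < s := lt_of_le_of_lt (by positivity) this
      rw [neg_div]
      nlinarith
    nlinarith

private lemma psi_measurable {n₁ n₂ : ℝ} : Measurable (psi n₁ n₂) := by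
  unfold psi
  apply Measurable.ite (measurableSet_le measurable_id measurable_const) measurable_const
  apply Measurable.ite (measurableSet_le measurable_id measurable_const)
    (measurable_const.div measurable_id)
  exact (measurable_const.mul ((measurable_const.mul measurable_id).neg.div_const 8).exp)

private lemma psi_intervalIntegrable {n₁ n₂ : ℝ} (h1 : 1 ≤ n₁) (h12 : n₁ ≤ n₂) {f : ℝ → ℝ}
    (hf : Measurable f) (a b : ℝ) :
    IntervalIntegrable (fun u => psi n₁ n₂ (f u)) volume a b := by
  rw [intervalIntegrable_iff]
  apply MeasureTheory.Integrable.mono' (integrableOn_const (C := 2 * n₂) measure_Ioc_lt_top.ne)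
  · exact (psi_measurable.comp hf).aestronglyMeasurable
  · refine Filter.Eventually.of_forall fun u => ?_
    rw [Real.norm_eq_abs, abs_of_nonneg (psi_nonneg h1 h12 _)]
    exact psi_le h1 h12 _

private lemma psi_integral_bound {n₁ n₂ : ℝ} (h1 : 1 ≤ n₁) (h12 : n₁ < n₂) {t : ℝ}
    (ht : 0 ≤ t) :
    ∫ s in (0:ℝ)..t, psi n₁ n₂ s ≤ 20 + 4 * Real.log (n₂ / n₁) := by
  have hn1 : 0 < n₁ := by linarith
  have hn2 : 0 < n₂ := by linarith
  have hA : 0 < 4 / n₂ := by positivity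
  have hB : 0 < 4 / n₁ := by positivity
  have hAB : 4 / n₂ < 4 / n₁ := by
    apply div_lt_div_of_pos_left (by norm_num) hn1 h12
  have hlog : 0 ≤ Real.log (n₂ / n₁) := Real.log_nonneg (by
    rw [le_div_iff₀ hn1]; linarith)
  have hint : ∀ a b : ℝ, IntervalIntegrable (psi n₁ n₂) volume a b := fun a b => by
    simpa using psi_intervalIntegrable h1 h12.le measurable_id a b
  rcases le_or_gt t (4 / n₂) with hcase | hcase
  · calc ∫ s in (0:ℝ)..t, psi n₁ n₂ s ≤ ∫ _ in (0:ℝ)..t, n₂ := by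
          apply intervalIntegral.integral_mono_on ht (hint 0 t) intervalIntegrable_const
          intro s hs
          unfold psi
          rw [if_pos (hs.2.trans hcase)]
      _ = t * n₂ := by simp [smul_eq_mul]
      _ ≤ (4 / n₂) * n₂ := by nlinarith
      _ ≤ 20 + 4 * Real.log (n₂ / n₁) := by
          rw [div_mul_cancel₀ _ hn2.ne']; linarith
  · set t₂ := min t (4 / n₁) with ht₂
    have h1t : 4 / n₂ ≤ t₂ := le_min hcase.le hAB.le
    have h2t : t₂ ≤ t := min_le_left _ _
    have e1 := intervalIntegral.integral_add_adjacent_intervals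
      (hint 0 (4 / n₂)) (hint (4 / n₂) t₂)
    have e2 := intervalIntegral.integral_add_adjacent_intervals (hint 0 t₂) (hint t₂ t)
    have p1 : ∫ s in (0:ℝ)..(4 / n₂), psi n₁ n₂ s ≤ 4 := by
      calc ∫ s in (0:ℝ)..(4 / n₂), psi n₁ n₂ s ≤ ∫ _ in (0:ℝ)..(4 / n₂), n₂ := by
            apply intervalIntegral.integral_mono_on hA.le (hint _ _) intervalIntegrable_const
            intro s hs
            unfold psi
            rw [if_pos hs.2]
        _ = (4 / n₂) * n₂ := by simp [smul_eq_mul]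
        _ = 4 := by rw [div_mul_cancel₀ _ hn2.ne']
    have p2 : ∫ s in (4 / n₂)..t₂, psi n₁ n₂ s ≤ 4 * Real.log (n₂ / n₁) := by
      have hmono : ∫ s in (4 / n₂)..t₂, psi n₁ n₂ s ≤ ∫ s in (4 / n₂)..t₂, 4 * (1 / s) := by
        apply intervalIntegral.integral_mono_on h1t (hint _ _)
        · apply ContinuousOn.intervalIntegrable
          apply ContinuousOn.mul continuousOn_const
          apply ContinuousOn.div continuousOn_const continuousOn_id
          intro s hs
          rw [Set.uIcc_of_le h1t] at hs
          exact (lt_of_lt_of_le hA hs.1).ne'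
        · intro s hs
          have hs0 : 0 < s := lt_of_lt_of_le hA hs.1
          unfold psi
          split_ifs with hA' hB'
          · have : s = 4 / n₂ := le_antisymm hA' hs.1
            rw [this]
            have h4 : 4 * (1 / (4 / n₂)) = n₂ := by field_simp
            linarith
          · rw [mul_one_div]
          · exact absurd (hs.2.trans (min_le_right _ _)) hB'
      have hend : ∫ s in (4 / n₂)..t₂, 4 * (1 / s) = 4 * Real.log (t₂ / (4 / n₂)) := by
        rw [intervalIntegral.integral_const_mul, integral_one_div]
        intro h
        rw [Set.mem_uIcc] at h
        rcases h with h | h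
        · linarith [h.1, hA]
        · linarith [h.2, hA, h1t]
      rw [hend] at hmono
      have ht₂pos : 0 < t₂ := lt_of_lt_of_le hA h1t
      have : Real.log (t₂ / (4 / n₂)) ≤ Real.log (n₂ / n₁) := by
        apply Real.log_le_log (div_pos ht₂pos hA)
        have ht₂B : t₂ ≤ 4 / n₁ := min_le_right _ _
        rw [div_le_div_iff₀ hA hn1]
        rw [le_div_iff₀ hn1] at ht₂B
        have h4 : n₂ * (4 / n₂) = 4 := by field_simp
        linarith
      linarith
    have p3 : ∫ s in t₂..t, psi n₁ n₂ s ≤ 16 := by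
      rcases le_or_gt t (4 / n₁) with htB | htB
      · rw [ht₂, min_eq_left htB, intervalIntegral.integral_same]; norm_num
      · rw [ht₂, min_eq_right htB.le]
        have hBt : 4 / n₁ ≤ t := htB.le
        calc ∫ s in (4 / n₁)..t, psi n₁ n₂ s
            ≤ ∫ s in (4 / n₁)..t, 2 * n₁ * Real.exp (-(n₁ / 8 * s)) := by
              apply intervalIntegral.integral_mono_on hBt (hint _ _)
              · apply Continuous.intervalIntegrable
                continuity
              · intro s hs
                have hsB : 4 / n₁ ≤ s := hs.1
                have harg : -(n₁ * s) / 8 = -(n₁ / 8 * s) := by ring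
                unfold psi
                split_ifs with hA' hB'
                · linarith [hAB, hsB, hA']
                · have hseq : s = 4 / n₁ := le_antisymm hB' hsB
                  have : 4 / s = n₁ := by rw [hseq]; field_simp
                  rw [this, hseq]
                  have harg2 : -(n₁ / 8 * (4 / n₁)) = -(1/2) := by field_simp; ring
                  rw [harg2]
                  have he : Real.exp (-(1/2:ℝ)) * Real.exp (1/2) = 1 := by
                    rw [← Real.exp_add]; norm_num
                  nlinarith [exp_half_lt_two', Real.exp_pos (-(1/2:ℝ)),
                    Real.exp_pos (1/2)]
                · rw [harg]
          _ = 2 * n₁ * ∫ s in (4 / n₁)..t, Real.exp (-(n₁ / 8 * s)) := by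
              rw [intervalIntegral.integral_const_mul]
          _ ≤ 2 * n₁ * (1 / (n₁ / 8)) := by
              apply mul_le_mul_of_nonneg_left (exp_integral_le' (by positivity) hB.le)
                (by positivity)
          _ = 16 := by field_simp; ring
    linarith

set_option maxHeartbeats 1000000 in
/-- Fourier-side Duhamel estimate for the semigroup generated by
`−(1/4)(−Δ)^{1/2}` over the band of frequencies `n₁ < |k| ≤ n₂`. -/
theorem statement12 :
    ∃ C : ℝ, 0 < C ∧
      ∀ (l T : ℝ), 0 ≤ l → 0 < T →
      ∀ (n₁ n₂ : ℤ), 1 ≤ n₁ → n₁ < n₂ →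
      ∀ (a : ℤ → ℝ → ℂ),
        (∀ k : ℤ, n₁ < |k| → |k| ≤ n₂ → ContinuousOn (a k) (Set.Icc 0 T)) →
        ∀ t ∈ Set.Icc (0 : ℝ) T,
          ∑ k ∈ (Finset.Icc (-n₂) n₂).filter (fun k => n₁ < |k|),
              (|k| : ℝ) ^ (2 * (l + 1)) *
                ‖∫ t' in (0 : ℝ)..t, Real.exp (-(|k| : ℝ) * (t - t') / 4) • a k t'‖ ^ 2
            ≤ C * (1 + Real.log ((n₂ : ℝ) / (n₁ : ℝ))) *
              ⨆ t' : Set.Icc (0 : ℝ) T,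
                ∑ k ∈ (Finset.Icc (-n₂) n₂).filter (fun k => n₁ < |k|),
                  (|k| : ℝ) ^ (2 * l) * ‖a k (t' : ℝ)‖ ^ 2 := by
  refine ⟨100, by norm_num, ?_⟩
  intro l T hl hT n₁ n₂ hn₁ hn12 a ha t ht
  obtain ⟨ht0, htT⟩ := ht
  have hn₁R : (1:ℝ) ≤ (n₁:ℝ) := by exact_mod_cast hn₁
  have hn12R : (n₁:ℝ) < (n₂:ℝ) := by exact_mod_cast hn12
  have hn1pos : (0:ℝ) < (n₁:ℝ) := by linarith
  have hn2pos : (0:ℝ) < (n₂:ℝ) := by linarith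
  have hL : 0 ≤ Real.log ((n₂:ℝ)/(n₁:ℝ)) := Real.log_nonneg (by
    rw [le_div_iff₀ hn1pos]; linarith)
  haveI : Nonempty (Set.Icc (0:ℝ) T) := ⟨⟨0, le_refl 0, hT.le⟩⟩
  have hmemZ : ∀ k ∈ (Finset.Icc (-n₂) n₂).filter (fun k => n₁ < |k|),
      n₁ < |k| ∧ |k| ≤ n₂ := by
    intro k hk
    rw [Finset.mem_filter, Finset.mem_Icc] at hk
    exact ⟨hk.2, abs_le.mpr ⟨hk.1.1, hk.1.2⟩⟩
  have hmemR : ∀ k ∈ (Finset.Icc (-n₂) n₂).filter (fun k => n₁ < |k|),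
      (n₁:ℝ) < (|k|:ℝ) ∧ ((|k|:ℝ)) ≤ (n₂:ℝ) := by
    intro k hk
    obtain ⟨h1, h2⟩ := hmemZ k hk
    exact ⟨by exact_mod_cast h1, by exact_mod_cast h2⟩
  have hbdd : BddAbove (Set.range fun t' : Set.Icc (0:ℝ) T =>
      ∑ k ∈ (Finset.Icc (-n₂) n₂).filter (fun k => n₁ < |k|),
        (|k| : ℝ) ^ (2 * l) * ‖a k (t' : ℝ)‖ ^ 2) := by
    apply IsCompact.bddAbove (isCompact_range ?_)
    apply continuous_finset_sum
    intro k hk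
    exact continuous_const.mul
      ((ContinuousOn.restrict (ha k (hmemZ k hk).1 (hmemZ k hk).2)).norm.pow 2)
  set M := ⨆ t' : Set.Icc (0:ℝ) T,
      ∑ k ∈ (Finset.Icc (-n₂) n₂).filter (fun k => n₁ < |k|),
        (|k| : ℝ) ^ (2 * l) * ‖a k (t' : ℝ)‖ ^ 2 with hMdef
  have hFM : ∀ u : Set.Icc (0:ℝ) T,
      (∑ k ∈ (Finset.Icc (-n₂) n₂).filter (fun k => n₁ < |k|),
        (|k| : ℝ) ^ (2 * l) * ‖a k (u : ℝ)‖ ^ 2) ≤ M := fun u => le_ciSup hbdd u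
  have hM0 : 0 ≤ M :=
    le_trans (Finset.sum_nonneg fun k hk => by positivity) (hFM ⟨0, le_refl 0, hT.le⟩)
  have harg : ∀ (x u : ℝ), -x * (t - u) / 4 = -(x / 4 * (t - u)) := fun x u => by ring
  simp only [harg]
  -- integrability of the per-k integrands
  have hcont : ∀ k ∈ (Finset.Icc (-n₂) n₂).filter (fun k => n₁ < |k|),
      ContinuousOn (a k) (Set.Icc 0 t) := fun k hk =>
    (ha k (hmemZ k hk).1 (hmemZ k hk).2).mono (Set.Icc_subset_Icc le_rfl htT)
  have hintk : ∀ k ∈ (Finset.Icc (-n₂) n₂).filter (fun k => n₁ < |k|),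
      IntervalIntegrable (fun u => (4 * ((|k|:ℝ)) ^ (2*l+1)) *
        (Real.exp (-((|k|:ℝ) / 4 * (t - u))) * ‖a k u‖ ^ 2)) volume 0 t := by
    intro k hk
    apply ContinuousOn.intervalIntegrable
    apply ContinuousOn.mul continuousOn_const
    apply ContinuousOn.mul (Continuous.continuousOn
      (Real.continuous_exp.comp ((continuous_const.mul (continuous_const.sub continuous_id)).neg)))
    rw [Set.uIcc_of_le ht0]
    exact (hcont k hk).norm.pow 2
  have key : ∀ k ∈ (Finset.Icc (-n₂) n₂).filter (fun k => n₁ < |k|),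
      ((|k|:ℝ)) ^ (2*(l+1)) *
          ‖∫ t' in (0:ℝ)..t, Real.exp (-((|k|:ℝ) / 4 * (t - t'))) • a k t'‖ ^ 2
        ≤ (4 * ((|k|:ℝ)) ^ (2*l+1)) *
          ∫ u in (0:ℝ)..t, Real.exp (-((|k|:ℝ) / 4 * (t - u))) * ‖a k u‖ ^ 2 := by
    intro k hk
    obtain ⟨hk1, hk2⟩ := hmemR k hk
    have hx0 : (0:ℝ) < (|k|:ℝ) := by linarith
    have hg : Continuous (fun u => Real.exp (-((|k|:ℝ) / 4 * (t - u)))) :=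
      Real.continuous_exp.comp ((continuous_const.mul (continuous_const.sub continuous_id)).neg)
    have hp : (∫ u in (0:ℝ)..t, Real.exp (-((|k|:ℝ) / 4 * (t - u)))) ≤ 4 / (|k|:ℝ) := by
      have := exp_kernel_integral' (c := ((|k|:ℝ)) / 4) (by positivity) ht0
      rwa [one_div_div] at this
    have hcs := cs_bound' ht0 hg (fun u => (Real.exp_pos _).le) hp (hcont k hk)
    calc ((|k|:ℝ)) ^ (2*(l+1)) *
          ‖∫ t' in (0:ℝ)..t, Real.exp (-((|k|:ℝ) / 4 * (t - t'))) • a k t'‖ ^ 2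
        ≤ ((|k|:ℝ)) ^ (2*(l+1)) * ((4 / (|k|:ℝ)) *
            ∫ u in (0:ℝ)..t, Real.exp (-((|k|:ℝ) / 4 * (t - u))) * ‖a k u‖ ^ 2) :=
          mul_le_mul_of_nonneg_left hcs (Real.rpow_nonneg hx0.le _)
      _ = (4 * ((|k|:ℝ)) ^ (2*l+1)) *
            ∫ u in (0:ℝ)..t, Real.exp (-((|k|:ℝ) / 4 * (t - u))) * ‖a k u‖ ^ 2 := by
          rw [show (2*(l+1)) = (2*l+1) + 1 by ring, Real.rpow_add hx0, Real.rpow_one]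
          field_simp
  have hψint : IntervalIntegrable (fun u => (4 * M) * psi (n₁:ℝ) (n₂:ℝ) (t - u)) volume 0 t :=
    (psi_intervalIntegrable hn₁R hn12R.le (measurable_const.sub measurable_id) 0 t).const_mul _
  have hsumint : IntervalIntegrable (fun u => ∑ k ∈ (Finset.Icc (-n₂) n₂).filter
      (fun k => n₁ < |k|), (4 * ((|k|:ℝ)) ^ (2*l+1)) *
        (Real.exp (-((|k|:ℝ) / 4 * (t - u))) * ‖a k u‖ ^ 2)) volume 0 t := by
    have h := IntervalIntegrable.sum (μ := volume) (a := 0) (b := t)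
      ((Finset.Icc (-n₂) n₂).filter (fun k => n₁ < |k|)) hintk
    have heq : (fun u => ∑ k ∈ (Finset.Icc (-n₂) n₂).filter (fun k => n₁ < |k|),
        (4 * ((|k|:ℝ)) ^ (2*l+1)) * (Real.exp (-((|k|:ℝ) / 4 * (t - u))) * ‖a k u‖ ^ 2))
        = (∑ k ∈ (Finset.Icc (-n₂) n₂).filter (fun k => n₁ < |k|),
          fun u => (4 * ((|k|:ℝ)) ^ (2*l+1)) *
            (Real.exp (-((|k|:ℝ) / 4 * (t - u))) * ‖a k u‖ ^ 2)) := by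
      funext u
      rw [Finset.sum_apply]
    rw [heq]
    exact h
  have hpoint : ∀ u ∈ Set.Icc 0 t,
      (∑ k ∈ (Finset.Icc (-n₂) n₂).filter (fun k => n₁ < |k|),
        (4 * ((|k|:ℝ)) ^ (2*l+1)) * (Real.exp (-((|k|:ℝ) / 4 * (t - u))) * ‖a k u‖ ^ 2))
      ≤ (4 * M) * psi (n₁:ℝ) (n₂:ℝ) (t - u) := by
    intro u hu
    have hs : 0 ≤ t - u := by linarith [hu.2]
    have hψ : 0 ≤ psi (n₁:ℝ) (n₂:ℝ) (t - u) := psi_nonneg hn₁R hn12R.le _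
    have huT : u ∈ Set.Icc (0:ℝ) T := ⟨hu.1, hu.2.trans htT⟩
    calc (∑ k ∈ (Finset.Icc (-n₂) n₂).filter (fun k => n₁ < |k|),
        (4 * ((|k|:ℝ)) ^ (2*l+1)) * (Real.exp (-((|k|:ℝ) / 4 * (t - u))) * ‖a k u‖ ^ 2))
        ≤ ∑ k ∈ (Finset.Icc (-n₂) n₂).filter (fun k => n₁ < |k|),
            (4 * psi (n₁:ℝ) (n₂:ℝ) (t - u)) * (((|k|:ℝ)) ^ (2*l) * ‖a k u‖ ^ 2) := by
          apply Finset.sum_le_sum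
          intro k hk
          obtain ⟨hk1, hk2⟩ := hmemR k hk
          have hx0 : (0:ℝ) < (|k|:ℝ) := by linarith
          have hkb : ((|k|:ℝ)) * Real.exp (-((|k|:ℝ) / 4 * (t - u)))
              ≤ psi (n₁:ℝ) (n₂:ℝ) (t - u) := by
            have := kernel_bound' hn₁R hk1.le hk2 hs
            simpa [psi] using this
          have hA2 : (0:ℝ) ≤ ‖a k u‖ ^ 2 := by positivity
          have hxe : ((|k|:ℝ)) ^ (2*l+1) = ((|k|:ℝ)) ^ (2*l) * ((|k|:ℝ)) := by
            rw [Real.rpow_add hx0, Real.rpow_one]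
          have hnn : (0:ℝ) ≤ 4 * (((|k|:ℝ)) ^ (2*l) * ‖a k u‖ ^ 2) :=
            mul_nonneg (by norm_num) (mul_nonneg (Real.rpow_nonneg hx0.le _) hA2)
          calc (4 * ((|k|:ℝ)) ^ (2*l+1)) * (Real.exp (-((|k|:ℝ) / 4 * (t - u))) * ‖a k u‖ ^ 2)
              = (4 * (((|k|:ℝ)) ^ (2*l) * ‖a k u‖ ^ 2)) *
                  (((|k|:ℝ)) * Real.exp (-((|k|:ℝ) / 4 * (t - u)))) := by rw [hxe]; ring
            _ ≤ (4 * (((|k|:ℝ)) ^ (2*l) * ‖a k u‖ ^ 2)) * psi (n₁:ℝ) (n₂:ℝ) (t - u) :=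
                mul_le_mul_of_nonneg_left hkb hnn
            _ = (4 * psi (n₁:ℝ) (n₂:ℝ) (t - u)) * (((|k|:ℝ)) ^ (2*l) * ‖a k u‖ ^ 2) := by
                ring
      _ = (4 * psi (n₁:ℝ) (n₂:ℝ) (t - u)) *
            ∑ k ∈ (Finset.Icc (-n₂) n₂).filter (fun k => n₁ < |k|),
              ((|k|:ℝ)) ^ (2*l) * ‖a k u‖ ^ 2 := by rw [Finset.mul_sum]
      _ ≤ (4 * psi (n₁:ℝ) (n₂:ℝ) (t - u)) * M :=
          mul_le_mul_of_nonneg_left (hFM ⟨u, huT⟩) (by positivity)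
      _ = (4 * M) * psi (n₁:ℝ) (n₂:ℝ) (t - u) := by ring
  calc (∑ k ∈ (Finset.Icc (-n₂) n₂).filter (fun k => n₁ < |k|),
      ((|k|:ℝ)) ^ (2*(l+1)) *
        ‖∫ t' in (0:ℝ)..t, Real.exp (-((|k|:ℝ) / 4 * (t - t'))) • a k t'‖ ^ 2)
      ≤ ∑ k ∈ (Finset.Icc (-n₂) n₂).filter (fun k => n₁ < |k|),
          (4 * ((|k|:ℝ)) ^ (2*l+1)) *
            ∫ u in (0:ℝ)..t, Real.exp (-((|k|:ℝ) / 4 * (t - u))) * ‖a k u‖ ^ 2 :=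
        Finset.sum_le_sum key
    _ = ∑ k ∈ (Finset.Icc (-n₂) n₂).filter (fun k => n₁ < |k|),
          ∫ u in (0:ℝ)..t, (4 * ((|k|:ℝ)) ^ (2*l+1)) *
            (Real.exp (-((|k|:ℝ) / 4 * (t - u))) * ‖a k u‖ ^ 2) := by
        refine Finset.sum_congr rfl fun k hk => ?_
        rw [intervalIntegral.integral_const_mul]
    _ = ∫ u in (0:ℝ)..t, ∑ k ∈ (Finset.Icc (-n₂) n₂).filter (fun k => n₁ < |k|),
          (4 * ((|k|:ℝ)) ^ (2*l+1)) *
            (Real.exp (-((|k|:ℝ) / 4 * (t - u))) * ‖a k u‖ ^ 2) :=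
        (intervalIntegral.integral_finset_sum hintk).symm
    _ ≤ ∫ u in (0:ℝ)..t, (4 * M) * psi (n₁:ℝ) (n₂:ℝ) (t - u) :=
        intervalIntegral.integral_mono_on ht0 hsumint hψint hpoint
    _ = (4 * M) * ∫ u in (0:ℝ)..t, psi (n₁:ℝ) (n₂:ℝ) (t - u) :=
        intervalIntegral.integral_const_mul _ _
    _ = (4 * M) * ∫ s in (0:ℝ)..t, psi (n₁:ℝ) (n₂:ℝ) s := by
        rw [intervalIntegral.integral_comp_sub_left (psi (n₁:ℝ) (n₂:ℝ)) t]
        norm_num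
    _ ≤ (4 * M) * (20 + 4 * Real.log ((n₂:ℝ)/(n₁:ℝ))) :=
        mul_le_mul_of_nonneg_left (psi_integral_bound hn₁R hn12R ht0) (by positivity)
    _ ≤ 100 * (1 + Real.log ((n₂:ℝ)/(n₁:ℝ))) * M := by nlinarith [mul_nonneg hM0 hL]
end

section
/- For every γ ∈ [0,1) there is a constant C > 0 depending only on γ with the following property. Let l ≥ 0 be a real number, T > 0, and N > 1. For each k ∈ ℤ with |k| > N let a_k : [0,T] → ℂ be continuous, and assume A² := sup_{t' ∈ [0,T]} Σ_{k ∈ ℤ, |k| > N} |k|^{2l} |a_k(t')|² < ∞. Then for every t ∈ [0,T]: Σ_{k ∈ ℤ, |k| > N} |k|^{2(l+γ)} | ∫_0^t e^{−|k|(t−t')/4} a_k(t') dt' |² ≤ C N^{2γ−2} A². -/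
open MeasureTheory Real Filter Topology
open scoped ENNReal

/-- pointwise kernel bound -/
lemma ker_bound {γ N x u : ℝ} (hγ0 : 0 ≤ γ) (hγ1 : γ < 1) (hN : 0 < N) (hx : N ≤ x)
    (hu : 0 < u) :
    x ^ (2*γ-1) * Real.exp (-x * u / 4) ≤
      (N ^ (2*γ-1) + 8 ^ (2*γ-1) * u ^ (-(2*γ-1))) * Real.exp (-(N/8 * u)) := by
  have hx0 : 0 < x := lt_of_lt_of_le hN hx
  set a : ℝ := 2*γ-1 with ha
  have ha1 : a ≤ 1 := by rw [ha]; linarith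
  have hexp8 : Real.exp (-(x * u) / 8) ≤ Real.exp (-(N/8 * u)) := by
    apply Real.exp_le_exp.mpr
    rw [neg_div, neg_le_neg_iff]
    calc N / 8 * u = N * u / 8 := by ring
    _ ≤ x * u / 8 := by gcongr
  have hsplit : Real.exp (-x * u / 4) = Real.exp (-(x*u)/8) * Real.exp (-(x*u)/8) := by
    rw [← Real.exp_add]; ring_nf
  rcases le_or_gt a 0 with h0 | h0
  · have h1 : x ^ a ≤ N ^ a := Real.rpow_le_rpow_of_nonpos hN hx h0
    have h2 : Real.exp (-x*u/4) ≤ Real.exp (-(N/8*u)) := by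
      rw [hsplit]
      calc Real.exp (-(x*u)/8) * Real.exp (-(x*u)/8)
          ≤ 1 * Real.exp (-(N/8*u)) := by
            apply mul_le_mul _ hexp8 (Real.exp_pos _).le zero_le_one
            apply Real.exp_le_one_iff.mpr
            have : (0:ℝ) ≤ x * u := by positivity
            linarith
      _ = Real.exp (-(N/8*u)) := one_mul _
    calc x ^ a * Real.exp (-x*u/4) ≤ N ^ a * Real.exp (-(N/8*u)) := by
          apply mul_le_mul h1 h2 (Real.exp_pos _).le (Real.rpow_nonneg hN.le _)
    _ ≤ (N ^ a + 8 ^ a * u ^ (-a)) * Real.exp (-(N/8*u)) := by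
          have : (0:ℝ) ≤ 8 ^ a * u ^ (-a) := by positivity
          nlinarith [Real.exp_pos (-(N/8*u))]
  · -- 0 < a : use x^a * exp(-(xu)/8) ≤ 8^a * u^(-a)
    have hv : 0 < x * u / 8 := by positivity
    have key : x ^ a * Real.exp (-(x*u)/8) ≤ 8 ^ a * u ^ (-a) := by
      set v : ℝ := x * u / 8 with hvdef
      have hxv : x = 8 * v / u := by field_simp [hvdef]; rw [hvdef]; ring
      have hva : v ^ a ≤ Real.exp v := by
        rcases le_or_gt v 1 with hv1 | hv1
        · calc v ^ a ≤ 1 := Real.rpow_le_one hv.le hv1 h0.le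
          _ ≤ Real.exp v := by linarith [Real.add_one_le_exp v, hv.le]
        · calc v ^ a ≤ v ^ (1:ℝ) := Real.rpow_le_rpow_of_exponent_le hv1.le ha1
          _ = v := Real.rpow_one v
          _ ≤ Real.exp v := by linarith [Real.add_one_le_exp v]
      have h8 : x ^ a = 8 ^ a * v ^ a * (u ^ a)⁻¹ := by
        rw [hxv, div_rpow (by positivity) hu.le, Real.mul_rpow (by norm_num) hv.le]
        ring
      rw [h8, Real.rpow_neg hu.le]
      have hexpv : Real.exp (-(x*u)/8) = (Real.exp v)⁻¹ := by
        rw [← Real.exp_neg]; congr 1; rw [hvdef]; ring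
      rw [hexpv]
      rw [mul_assoc, mul_assoc]
      apply mul_le_mul_of_nonneg_left _ (by positivity : (0:ℝ) ≤ 8 ^ a)
      have h1 : v ^ a * (Real.exp v)⁻¹ ≤ 1 := by
        rw [← div_eq_mul_inv, div_le_one (Real.exp_pos v)]; exact hva
      have hu0 : (0:ℝ) ≤ (u ^ a)⁻¹ := by positivity
      calc v ^ a * ((u ^ a)⁻¹ * (Real.exp v)⁻¹) = (v ^ a * (Real.exp v)⁻¹) * (u ^ a)⁻¹ := by ring
      _ ≤ 1 * (u ^ a)⁻¹ := mul_le_mul_of_nonneg_right h1 hu0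
      _ = (u ^ a)⁻¹ := one_mul _
    calc x ^ a * Real.exp (-x*u/4)
        = (x ^ a * Real.exp (-(x*u)/8)) * Real.exp (-(x*u)/8) := by
          rw [hsplit]; ring
    _ ≤ (8 ^ a * u ^ (-a)) * Real.exp (-(N/8*u)) := by
          apply mul_le_mul key hexp8 (Real.exp_pos _).le (by positivity)
    _ ≤ (N ^ a + 8 ^ a * u ^ (-a)) * Real.exp (-(N/8*u)) := by
          have : (0:ℝ) ≤ N ^ a := Real.rpow_nonneg hN.le _
          nlinarith [Real.exp_pos (-(N/8*u))]

/-- substitution `s ↦ t - s` on `Ioo 0 t` -/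
lemma sub_subst (t : ℝ) (f : ℝ → ℝ≥0∞) :
    ∫⁻ s in Set.Ioo (0:ℝ) t, f (t - s) = ∫⁻ u in Set.Ioo (0:ℝ) t, f u := by
  have hemb : MeasurableEmbedding (fun s : ℝ => t - s) := by
    have := (MeasurableEquiv.subLeft t).measurableEmbedding
    convert this using 1
    ext s
    rfl
  have hpre : (fun s : ℝ => t - s) ⁻¹' Set.Ioo (0:ℝ) t = Set.Ioo (0:ℝ) t := by
    ext s
    simp only [Set.mem_preimage, Set.mem_Ioo]
    constructor <;> (intro h; constructor <;> linarith [h.1, h.2])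
  calc ∫⁻ s in Set.Ioo (0:ℝ) t, f (t - s)
      = ∫⁻ s in (fun s : ℝ => t - s) ⁻¹' Set.Ioo (0:ℝ) t, f (t - s) := by rw [hpre]
  _ = ∫⁻ u in Set.Ioo (0:ℝ) t, f u :=
      (MeasureTheory.Measure.measurePreserving_sub_left volume t).setLIntegral_comp_preimage_emb
        hemb f _

/-- Gamma-type integral bound -/
lemma gamma_int {c e b : ℝ} (hc : 0 ≤ c) (he : -1 < e) (hb : 0 < b) (t : ℝ) :
    ∫⁻ u in Set.Ioo (0:ℝ) t, ENNReal.ofReal (c * (u ^ e * Real.exp (-(b * u)))) ≤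
      ENNReal.ofReal (c * ((1/b) ^ (e+1) * Real.Gamma (e+1))) := by
  have hmono : ∫⁻ u in Set.Ioo (0:ℝ) t, ENNReal.ofReal (c * (u ^ e * Real.exp (-(b * u)))) ≤
      ∫⁻ u in Set.Ioi (0:ℝ), ENNReal.ofReal (c * (u ^ e * Real.exp (-(b * u)))) :=
    lintegral_mono_set Set.Ioo_subset_Ioi_self
  refine hmono.trans ?_
  have hint : IntegrableOn (fun u : ℝ => c * (u ^ e * Real.exp (-(b * u)))) (Set.Ioi 0) := by
    have h0 : IntegrableOn (fun u : ℝ => u ^ e * Real.exp (-b * u ^ (1:ℝ))) (Set.Ioi 0) :=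
      integrableOn_rpow_mul_exp_neg_mul_rpow he zero_lt_one hb
    have h1 : IntegrableOn (fun u : ℝ => u ^ e * Real.exp (-(b * u))) (Set.Ioi 0) := by
      refine h0.congr_fun (fun u hu => ?_) measurableSet_Ioi
      simp only [Real.rpow_one]; ring_nf
    exact h1.const_mul c
  have hnn : 0 ≤ᵐ[volume.restrict (Set.Ioi (0:ℝ))]
      fun u : ℝ => c * (u ^ e * Real.exp (-(b * u))) := by
    filter_upwards [ae_restrict_mem measurableSet_Ioi] with u hu
    have : (0:ℝ) < u := hu
    positivity
  rw [← MeasureTheory.ofReal_integral_eq_lintegral_ofReal hint hnn]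
  apply le_of_eq
  congr 1
  rw [integral_const_mul]
  congr 1
  have := Real.integral_rpow_mul_exp_neg_mul_Ioi (by linarith : (0:ℝ) < e + 1) hb
  rw [← this]
  apply setIntegral_congr_fun measurableSet_Ioi
  intro u hu
  norm_num

/-- per-frequency Duhamel Cauchy–Schwarz estimate -/
lemma stepA {x t T : ℝ} {g : ℝ → ℂ} (hx : 0 < x) (ht0 : 0 ≤ t) (htT : t ≤ T)
    (hg : ContinuousOn g (Set.Icc 0 T)) :
    ENNReal.ofReal (‖∫ t' in (0:ℝ)..t, Real.exp (-x * (t - t') / 4) • g t'‖ ^ 2)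
      ≤ ENNReal.ofReal (4 / x) *
        ∫⁻ s in Set.Ioo (0:ℝ) t, ENNReal.ofReal (Real.exp (-x * (t - s) / 4) * ‖g s‖ ^ 2) := by
  have hsub : Set.Ioo (0:ℝ) t ⊆ Set.Icc 0 T :=
    fun s hs => ⟨hs.1.le, hs.2.le.trans htT⟩
  have hIoc : volume.restrict (Set.Ioo (0:ℝ) t) = volume.restrict (Set.Ioc (0:ℝ) t) :=
    Measure.restrict_congr_set Ioo_ae_eq_Ioc
  set I := ∫ t' in (0:ℝ)..t, Real.exp (-x * (t - t') / 4) • g t' with hI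
  -- Step 1 : norm of integral ≤ lintegral of norms
  have h1 : ENNReal.ofReal ‖I‖ ≤
      ∫⁻ s in Set.Ioo (0:ℝ) t, ENNReal.ofReal (Real.exp (-x * (t - s) / 4) * ‖g s‖) := by
    rw [ofReal_norm, hI, intervalIntegral.integral_of_le ht0]
    calc (‖∫ s in Set.Ioc (0:ℝ) t, Real.exp (-x * (t - s) / 4) • g s‖ₑ : ℝ≥0∞)
        ≤ ∫⁻ s in Set.Ioc (0:ℝ) t, ‖Real.exp (-x * (t - s) / 4) • g s‖ₑ :=
          enorm_integral_le_lintegral_enorm _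
    _ = ∫⁻ s in Set.Ioo (0:ℝ) t, ENNReal.ofReal (Real.exp (-x * (t - s) / 4) * ‖g s‖) := by
        rw [← hIoc]
        apply lintegral_congr
        intro s
        rw [← ofReal_norm, norm_smul, Real.norm_of_nonneg (Real.exp_pos _).le]
  -- Hölder
  set F : ℝ → ℝ≥0∞ := fun s => ENNReal.ofReal (Real.exp (-x * (t - s) / 8)) with hF
  set G : ℝ → ℝ≥0∞ := fun s => ENNReal.ofReal (Real.exp (-x * (t - s) / 8) * ‖g s‖) with hG
  have hexpsplit : ∀ s : ℝ, Real.exp (-x * (t - s) / 4)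
      = Real.exp (-x * (t - s) / 8) * Real.exp (-x * (t - s) / 8) := by
    intro s; rw [← Real.exp_add]; ring_nf
  have hFmeas : AEMeasurable F (volume.restrict (Set.Ioo (0:ℝ) t)) := by
    apply Continuous.aemeasurable
    exact ENNReal.continuous_ofReal.comp (Real.continuous_exp.comp (by continuity))
  have hGmeas : AEMeasurable G (volume.restrict (Set.Ioo (0:ℝ) t)) := by
    apply ContinuousOn.aemeasurable _ measurableSet_Ioo
    apply ENNReal.continuous_ofReal.comp_continuousOn
    exact ((Real.continuous_exp.comp (by continuity)).continuousOn).mul ((hg.mono hsub).norm)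
  have hconj : (2:ℝ).HolderConjugate 2 := ⟨by norm_num, by norm_num, by norm_num⟩
  have hhold := ENNReal.lintegral_mul_le_Lp_mul_Lq (volume.restrict (Set.Ioo (0:ℝ) t))
    hconj hFmeas hGmeas
  have hFG : ∀ s : ℝ, ENNReal.ofReal (Real.exp (-x * (t - s) / 4) * ‖g s‖) = (F * G) s := by
    intro s
    simp only [Pi.mul_apply, hF, hG]
    rw [← ENNReal.ofReal_mul (Real.exp_pos _).le, hexpsplit s, mul_assoc]
  -- identify the squared integrals
  have hF2 : ∫⁻ s in Set.Ioo (0:ℝ) t, F s ^ (2:ℝ) =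
      ∫⁻ s in Set.Ioo (0:ℝ) t, ENNReal.ofReal (Real.exp (-x * (t - s) / 4)) := by
    apply lintegral_congr
    intro s
    rw [show (2:ℝ) = ((2:ℕ):ℝ) by norm_num, ENNReal.rpow_natCast, pow_two, hF]
    rw [← ENNReal.ofReal_mul (Real.exp_pos _).le, ← hexpsplit s]
  have hG2 : ∫⁻ s in Set.Ioo (0:ℝ) t, G s ^ (2:ℝ) =
      ∫⁻ s in Set.Ioo (0:ℝ) t, ENNReal.ofReal (Real.exp (-x * (t - s) / 4) * ‖g s‖ ^ 2) := by
    apply lintegral_congr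
    intro s
    rw [show (2:ℝ) = ((2:ℕ):ℝ) by norm_num, ENNReal.rpow_natCast, pow_two, hG]
    rw [← ENNReal.ofReal_mul (by positivity)]
    congr 1
    rw [hexpsplit s]; ring
  -- bound for ∫ F²
  have hF2bound : ∫⁻ s in Set.Ioo (0:ℝ) t, ENNReal.ofReal (Real.exp (-x * (t - s) / 4))
      ≤ ENNReal.ofReal (4 / x) := by
    rw [sub_subst t (fun u => ENNReal.ofReal (Real.exp (-x * u / 4)))]
    have h := gamma_int (c := 1) (e := 0) (b := x/4) zero_le_one (by norm_num) (by positivity) t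
    have heq : ∫⁻ u in Set.Ioo (0:ℝ) t, ENNReal.ofReal (Real.exp (-x * u / 4)) =
        ∫⁻ u in Set.Ioo (0:ℝ) t, ENNReal.ofReal (1 * (u ^ (0:ℝ) * Real.exp (-(x/4 * u)))) := by
      apply lintegral_congr
      intro u
      rw [Real.rpow_zero]
      ring_nf
    rw [heq]
    refine h.trans (le_of_eq ?_)
    congr 1
    rw [zero_add, Real.Gamma_one, Real.rpow_one]
    field_simp
  -- assemble
  calc ENNReal.ofReal (‖I‖ ^ 2) = (ENNReal.ofReal ‖I‖) ^ 2 := ENNReal.ofReal_pow (norm_nonneg _) 2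
  _ ≤ (∫⁻ s in Set.Ioo (0:ℝ) t,
        ENNReal.ofReal (Real.exp (-x * (t - s) / 4) * ‖g s‖)) ^ 2 := pow_le_pow_left' h1 2
  _ = (∫⁻ s in Set.Ioo (0:ℝ) t, (F * G) s) ^ 2 := by
      congr 1; exact lintegral_congr hFG
  _ ≤ ((∫⁻ s in Set.Ioo (0:ℝ) t, F s ^ (2:ℝ)) ^ (1/(2:ℝ)) *
        (∫⁻ s in Set.Ioo (0:ℝ) t, G s ^ (2:ℝ)) ^ (1/(2:ℝ))) ^ 2 := pow_le_pow_left' hhold 2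
  _ = (∫⁻ s in Set.Ioo (0:ℝ) t, F s ^ (2:ℝ)) * (∫⁻ s in Set.Ioo (0:ℝ) t, G s ^ (2:ℝ)) := by
      rw [mul_pow]
      congr 1 <;>
      · rw [← ENNReal.rpow_natCast _ 2, ← ENNReal.rpow_mul]
        norm_num
  _ ≤ ENNReal.ofReal (4 / x) *
        ∫⁻ s in Set.Ioo (0:ℝ) t, ENNReal.ofReal (Real.exp (-x * (t - s) / 4) * ‖g s‖ ^ 2) := by
      rw [hF2, hG2]
      exact mul_le_mul_left hF2bound _

/-- High-frequency Fourier-side Duhamel estimate for the semigroup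
generated by `−(1/4)(−Δ)^{1/2}`, over frequencies `|k| > N`. -/
theorem statement13 :
    ∀ γ : ℝ, 0 ≤ γ → γ < 1 →
      ∃ C : ℝ, 0 < C ∧
        ∀ (l T N : ℝ), 0 ≤ l → 0 < T → 1 < N →
        ∀ (a : ℤ → ℝ → ℂ),
          (∀ k : ℤ, N < |(k : ℝ)| → ContinuousOn (a k) (Set.Icc 0 T)) →
          -- `A² = sup_{t' ∈ [0,T]} Σ_{|k| > N} |k|^{2l} |a_k(t')|² < ∞`
          (⨆ t' ∈ Set.Icc (0 : ℝ) T,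
              ∑' k : ℤ, if N < |(k : ℝ)| then
                ENNReal.ofReal (|(k : ℝ)| ^ (2 * l) * ‖a k t'‖ ^ 2) else 0) ≠ ⊤ →
          ∀ t ∈ Set.Icc (0 : ℝ) T,
            (∑' k : ℤ, if N < |(k : ℝ)| then
                ENNReal.ofReal (|(k : ℝ)| ^ (2 * (l + γ)) *
                  ‖∫ t' in (0 : ℝ)..t, Real.exp (-|(k : ℝ)| * (t - t') / 4) • a k t'‖ ^ 2)
              else 0)
            ≤ ENNReal.ofReal (C * N ^ (2 * γ - 2)) *
              ⨆ t' ∈ Set.Icc (0 : ℝ) T,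
                ∑' k : ℤ, if N < |(k : ℝ)| then
                  ENNReal.ofReal (|(k : ℝ)| ^ (2 * l) * ‖a k t'‖ ^ 2) else 0 := by
  intro γ hγ0 hγ1
  have hΓpos : 0 < Real.Gamma (2 - 2*γ) := Real.Gamma_pos_of_pos (by linarith)
  refine ⟨32 * (1 + Real.Gamma (2 - 2*γ)), by nlinarith, ?_⟩
  intro l T N hl hT hN a hcont hsup t ht
  obtain ⟨ht0, htT⟩ := ht
  have hN0 : (0:ℝ) < N := by linarith
  set a' : ℝ := 2*γ - 1 with ha'
  set A : ℝ≥0∞ := ⨆ t' ∈ Set.Icc (0 : ℝ) T,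
      ∑' k : ℤ, if N < |(k : ℝ)| then
        ENNReal.ofReal (|(k : ℝ)| ^ (2 * l) * ‖a k t'‖ ^ 2) else 0 with hA
  have hsubIcc : Set.Ioo (0:ℝ) t ⊆ Set.Icc 0 T :=
    fun s hs => ⟨hs.1.le, hs.2.le.trans htT⟩
  -- the weight function
  set h : ℝ → ℝ := fun u => 4 * N ^ a' * (u ^ (0:ℝ) * Real.exp (-(N/8 * u))) +
      (4 * 8 ^ a') * (u ^ (-a') * Real.exp (-(N/8 * u))) with hh
  have hform : ∀ u : ℝ, 4 * ((N ^ a' + 8 ^ a' * u ^ (-a')) * Real.exp (-(N/8 * u))) = h u := by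
    intro u
    rw [hh]
    simp only [Real.rpow_zero]
    ring
  have hmeas_h : Measurable h := by
    apply Measurable.add <;>
    · apply Measurable.mul
      · exact measurable_const
      · apply Measurable.mul
        · exact measurable_id.pow measurable_const
        · exact Real.measurable_exp.comp ((measurable_const.mul measurable_id).neg)
  set w : ℝ → ℝ≥0∞ := fun s => ENNReal.ofReal (h (t - s)) with hw
  have hmeas_w : Measurable w :=
    ENNReal.measurable_ofReal.comp (hmeas_h.comp (measurable_const.sub measurable_id))
  set f : ℤ → ℝ → ℝ≥0∞ := fun k s =>
    if N < |(k : ℝ)| then ENNReal.ofReal (|(k : ℝ)| ^ (2 * l) * ‖a k s‖ ^ 2) else 0 with hf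
  have hmeas_f : ∀ k : ℤ, AEMeasurable (f k) (volume.restrict (Set.Ioo (0:ℝ) t)) := by
    intro k
    rw [hf]
    by_cases hk : N < |(k : ℝ)|
    · simp only [hk, if_true]
      apply AEMeasurable.ennreal_ofReal
      apply ContinuousOn.aemeasurable _ measurableSet_Ioo
      exact continuousOn_const.mul (((hcont k hk).mono hsubIcc).norm.pow 2)
    · simp only [hk, if_false]
      exact aemeasurable_const
  -- per-frequency estimate
  have key : ∀ k : ℤ,
      (if N < |(k : ℝ)| then
        ENNReal.ofReal (|(k : ℝ)| ^ (2 * (l + γ)) *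
          ‖∫ t' in (0 : ℝ)..t, Real.exp (-|(k : ℝ)| * (t - t') / 4) • a k t'‖ ^ 2) else 0)
      ≤ ∫⁻ s in Set.Ioo (0:ℝ) t, w s * f k s := by
    intro k
    by_cases hk : N < |(k : ℝ)|
    · simp only [hk, if_true]
      set x : ℝ := |(k : ℝ)| with hx
      have hx0 : 0 < x := lt_trans hN0 hk
      have hxN : N ≤ x := hk.le
      calc ENNReal.ofReal (x ^ (2 * (l + γ)) *
            ‖∫ t' in (0 : ℝ)..t, Real.exp (-x * (t - t') / 4) • a k t'‖ ^ 2)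
          = ENNReal.ofReal (x ^ (2 * (l + γ))) *
            ENNReal.ofReal (‖∫ t' in (0 : ℝ)..t, Real.exp (-x * (t - t') / 4) • a k t'‖ ^ 2) :=
            ENNReal.ofReal_mul (Real.rpow_nonneg hx0.le _)
      _ ≤ ENNReal.ofReal (x ^ (2 * (l + γ))) * (ENNReal.ofReal (4 / x) *
            ∫⁻ s in Set.Ioo (0:ℝ) t,
              ENNReal.ofReal (Real.exp (-x * (t - s) / 4) * ‖a k s‖ ^ 2)) :=
            mul_le_mul_right (stepA hx0 ht0 htT (hcont k hk)) _
      _ = ∫⁻ s in Set.Ioo (0:ℝ) t,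
            (ENNReal.ofReal (x ^ (2 * (l + γ))) * ENNReal.ofReal (4 / x)) *
              ENNReal.ofReal (Real.exp (-x * (t - s) / 4) * ‖a k s‖ ^ 2) := by
            rw [← mul_assoc, lintegral_const_mul' _ _
              (ENNReal.mul_ne_top ENNReal.ofReal_ne_top ENNReal.ofReal_ne_top)]
      _ ≤ ∫⁻ s in Set.Ioo (0:ℝ) t, w s * f k s := by
            apply lintegral_mono_ae
            filter_upwards [self_mem_ae_restrict measurableSet_Ioo] with s hs
            have hu : 0 < t - s := by linarith [hs.2]
            have hreal : x ^ (2 * (l + γ)) * (4 / x) *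
                (Real.exp (-x * (t - s) / 4) * ‖a k s‖ ^ 2) =
                (4 * (x ^ a' * Real.exp (-x * (t - s) / 4))) * (x ^ (2 * l) * ‖a k s‖ ^ 2) := by
              have hxs : x ^ (2 * (l + γ)) = x ^ a' * x ^ (2 * l) * x := by
                rw [show (2 * (l + γ) : ℝ) = (a' + 2 * l) + 1 by rw [ha']; ring,
                  Real.rpow_add hx0, Real.rpow_add hx0, Real.rpow_one]
              rw [hxs]
              field_simp
            rw [← ENNReal.ofReal_mul (Real.rpow_nonneg hx0.le _),
              ← ENNReal.ofReal_mul (by positivity), hreal,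
              ENNReal.ofReal_mul (by positivity)]
            simp only [hf, hk, if_true, hw]
            simp only [if_pos (show N < |(k:ℝ)| from hk)]
            apply mul_le_mul_left
            apply ENNReal.ofReal_le_ofReal
            rw [← hform (t - s)]
            have := ker_bound hγ0 hγ1 hN0 hxN hu
            nlinarith [this]
    · simp only [hk, if_false]
      exact zero_le
  -- sum the estimates and bound
  calc (∑' k : ℤ, if N < |(k : ℝ)| then
          ENNReal.ofReal (|(k : ℝ)| ^ (2 * (l + γ)) *
            ‖∫ t' in (0 : ℝ)..t, Real.exp (-|(k : ℝ)| * (t - t') / 4) • a k t'‖ ^ 2) else 0)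
      ≤ ∑' k : ℤ, ∫⁻ s in Set.Ioo (0:ℝ) t, w s * f k s := ENNReal.tsum_le_tsum key
  _ = ∫⁻ s in Set.Ioo (0:ℝ) t, ∑' k : ℤ, w s * f k s := by
      rw [← lintegral_tsum (f := fun k s => w s * f k s) (fun k => (hmeas_w.aemeasurable).mul (hmeas_f k))]
  _ = ∫⁻ s in Set.Ioo (0:ℝ) t, w s * ∑' k : ℤ, f k s := by
      apply lintegral_congr
      intro s
      rw [ENNReal.tsum_mul_left]
  _ ≤ ∫⁻ s in Set.Ioo (0:ℝ) t, w s * A := by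
      apply lintegral_mono_ae
      filter_upwards [self_mem_ae_restrict measurableSet_Ioo] with s hs
      apply mul_le_mul_right
      rw [hA]
      simp only [hf]
      exact le_biSup (fun t' => ∑' k : ℤ, if N < |(k : ℝ)| then
        ENNReal.ofReal (|(k : ℝ)| ^ (2 * l) * ‖a k t'‖ ^ 2) else 0) (hsubIcc hs)
  _ = (∫⁻ s in Set.Ioo (0:ℝ) t, w s) * A := lintegral_mul_const A hmeas_w
  _ ≤ ENNReal.ofReal ((32 * (1 + Real.Gamma (2 - 2*γ))) * N ^ (2 * γ - 2)) * A := by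
      apply mul_le_mul_left
      -- the weight integral bound
      calc ∫⁻ s in Set.Ioo (0:ℝ) t, w s
          = ∫⁻ u in Set.Ioo (0:ℝ) t, ENNReal.ofReal (h u) :=
            sub_subst t (fun u => ENNReal.ofReal (h u))
      _ ≤ ∫⁻ u in Set.Ioo (0:ℝ) t,
            (ENNReal.ofReal (4 * N ^ a' * (u ^ (0:ℝ) * Real.exp (-(N/8 * u)))) +
             ENNReal.ofReal ((4 * 8 ^ a') * (u ^ (-a') * Real.exp (-(N/8 * u))))) := by
          apply lintegral_mono
          intro u
          rw [hh]
          exact ENNReal.ofReal_add_le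
      _ = (∫⁻ u in Set.Ioo (0:ℝ) t,
            ENNReal.ofReal (4 * N ^ a' * (u ^ (0:ℝ) * Real.exp (-(N/8 * u))))) +
           ∫⁻ u in Set.Ioo (0:ℝ) t,
            ENNReal.ofReal ((4 * 8 ^ a') * (u ^ (-a') * Real.exp (-(N/8 * u)))) := by
          apply lintegral_add_left
          apply ENNReal.measurable_ofReal.comp
          apply Measurable.mul measurable_const
          exact (measurable_id.pow measurable_const).mul
            (Real.measurable_exp.comp ((measurable_const.mul measurable_id).neg))
      _ ≤ ENNReal.ofReal ((4 * N ^ a') * ((1/(N/8)) ^ ((0:ℝ)+1) * Real.Gamma ((0:ℝ)+1))) +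
            ENNReal.ofReal ((4 * 8 ^ a') * ((1/(N/8)) ^ (-a'+1) * Real.Gamma (-a'+1))) := by
          apply add_le_add
          · have hNpos : (0:ℝ) < N ^ a' := Real.rpow_pos_of_pos hN0 _
            have := gamma_int (c := 4 * N ^ a') (e := 0) (b := N/8)
              (by linarith) (by norm_num) (by positivity) t
            exact this
          · have h8pos : (0:ℝ) < 8 ^ a' := Real.rpow_pos_of_pos (by norm_num) _
            have := gamma_int (c := 4 * 8 ^ a') (e := -a') (b := N/8)
              (by linarith) (by rw [ha']; linarith) (by positivity) t
            exact this
      _ ≤ ENNReal.ofReal ((32 * (1 + Real.Gamma (2 - 2*γ))) * N ^ (2 * γ - 2)) := by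
          have hg1 : (0:ℝ) < Real.Gamma ((0:ℝ)+1) := by
            rw [show ((0:ℝ)+1) = 1 by norm_num, Real.Gamma_one]; norm_num
          have hg2 : (0:ℝ) < Real.Gamma (-a'+1) := Real.Gamma_pos_of_pos (by rw [ha']; linarith)
          have hb1 : (0:ℝ) < (1/(N/8)) ^ ((0:ℝ)+1) := Real.rpow_pos_of_pos (by positivity) _
          have hb2 : (0:ℝ) < (1/(N/8)) ^ (-a'+1) := Real.rpow_pos_of_pos (by positivity) _
          have hNa : (0:ℝ) < N ^ a' := Real.rpow_pos_of_pos hN0 _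
          have h8a : (0:ℝ) < (8:ℝ) ^ a' := Real.rpow_pos_of_pos (by norm_num) _
          rw [← ENNReal.ofReal_add
            (mul_nonneg (by linarith) (mul_nonneg hb1.le hg1.le))
            (mul_nonneg (by linarith) (mul_nonneg hb2.le hg2.le))]
          apply ENNReal.ofReal_le_ofReal
          apply le_of_eq
          have e1 : ((0:ℝ)+1) = (1:ℝ) := by norm_num
          have hN8 : (1/(N/8)) = 8/N := by field_simp
          rw [e1, Real.Gamma_one, Real.rpow_one, hN8]
          have e2 : (-a'+1) = 2 - 2*γ := by rw [ha']; ring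
          rw [e2]
          have e3 : (8/N) ^ (2 - 2*γ) = 8 ^ (2 - 2*γ) * N ^ (2*γ - 2) := by
            rw [Real.div_rpow (by norm_num) hN0.le]
            rw [div_eq_mul_inv, ← Real.rpow_neg hN0.le]
            congr 1
            ring
          rw [e3]
          have e4 : (8:ℝ) ^ a' * 8 ^ (2 - 2*γ) = 8 := by
            rw [← Real.rpow_add (by norm_num : (0:ℝ) < 8)]
            rw [ha']
            norm_num
          have e5 : N ^ a' * (8/N) = 32/4 * N ^ (2*γ-2) := by
            rw [ha']
            rw [show (2*γ-2 : ℝ) = (2*γ-1) + (-1) by ring, Real.rpow_add hN0,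
              Real.rpow_neg_one]
            field_simp
            ring
          linear_combination (4:ℝ) * e5 + 4 * N ^ (2*γ-2) * Real.Gamma (2-2*γ) * e4
end
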